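/- arXiv:math/0603363 — 10 statements merged into one kernel-verified Lean document; each statement's English description precedes it below -/
import Mathlib

section
/- Let ξ be a nonnegative real random variable with E[ξ^a] < ∞ for some a > 1 and E[ξ] > 0. Then for every x > 0, E[(ξ/(x+ξ))^a] / (E[ξ/(x+ξ)])^a ≤ E[ξ^a] / (E[ξ])^a. -/
/-!
Put `η = ξ / (x + ξ)`. Both `η` and `ξ / η = x + ξ` increase with `ξ`, so integrating a pointwise
rearrangement inequality over two independent copies of `ξ` gives
`E[ξ] E[η^a] ≤ E[ξ η^(a-1)] E[η]`. Hölder with exponents `a` and `a / (a - 1)` bounds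
`E[ξ η^(a-1)] ≤ E[ξ^a]^(1/a) E[η^a]^((a-1)/a)`; cancelling `E[η^a]^((a-1)/a)` and raising to the
power `a` gives the claim.
-/

open MeasureTheory

section Integrals

variable {α : Type*} [MeasurableSpace α] {μ : Measure α}

lemma memLp_ofReal_of_integrable_rpow {p : ℝ} (hp : 0 < p) {f : α → ℝ} (hf : 0 ≤ᵐ[μ] f)
    (hfm : AEStronglyMeasurable f μ) (hfp : Integrable (fun x => f x ^ p) μ) :
    MemLp f (ENNReal.ofReal p) μ := by
  rw [← integrable_norm_rpow_iff hfm (by simpa using hp) ENNReal.ofReal_ne_top,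
    ENNReal.toReal_ofReal hp.le]
  refine hfp.congr ?_
  filter_upwards [hf] with x hx
  rw [Real.norm_of_nonneg hx]

lemma integrable_of_integrable_rpow [IsFiniteMeasure μ] {p : ℝ} (hp : 1 ≤ p) {f : α → ℝ}
    (hf : 0 ≤ᵐ[μ] f) (hfm : AEStronglyMeasurable f μ) (hfp : Integrable (fun x => f x ^ p) μ) :
    Integrable f μ :=
  (memLp_ofReal_of_integrable_rpow (by linarith) hf hfm hfp).integrable (by simpa using hp)

theorem integral_mul_rpow_sub_one_le {p : ℝ} (hp : 1 < p) {f g : α → ℝ} (hf : 0 ≤ᵐ[μ] f)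
    (hg : 0 ≤ᵐ[μ] g) (hfm : AEMeasurable f μ) (hgm : AEMeasurable g μ)
    (hfp : Integrable (fun x => f x ^ p) μ) (hgp : Integrable (fun x => g x ^ p) μ) :
    ∫ x, f x * g x ^ (p - 1) ∂μ ≤
      (∫ x, f x ^ p ∂μ) ^ (1 / p) * (∫ x, g x ^ p ∂μ) ^ ((p - 1) / p) := by
  have hpq : p.HolderConjugate (p / (p - 1)) :=
    (Real.holderConjugate_iff_eq_conjExponent hp).2 rfl
  have hgq : (fun x => (g x ^ (p - 1)) ^ (p / (p - 1))) =ᵐ[μ] fun x => g x ^ p := by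
    filter_upwards [hg] with x hx
    rw [← Real.rpow_mul hx, mul_div_cancel₀ _ (sub_pos.2 hp).ne']
  have hg' : 0 ≤ᵐ[μ] fun x => g x ^ (p - 1) := by
    filter_upwards [hg] with x hx
    exact Real.rpow_nonneg hx _
  have h := integral_mul_le_Lp_mul_Lq_of_nonneg hpq hf hg'
    (memLp_ofReal_of_integrable_rpow (by linarith) hf hfm.aestronglyMeasurable hfp)
    (memLp_ofReal_of_integrable_rpow hpq.symm.pos hg' (hgm.pow_const _).aestronglyMeasurable
      (hgp.congr hgq.symm))
  rwa [integral_congr_ae hgq, one_div_div] at h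

theorem integral_mul_integral_le_of_forall_le [SFinite μ] {f g f' g' : α → ℝ}
    (hf : Integrable f μ) (hg : Integrable g μ) (hf' : Integrable f' μ) (hg' : Integrable g' μ)
    (h : ∀ x y, f x * g y + f y * g x ≤ f' x * g' y + f' y * g' x) :
    (∫ x, f x ∂μ) * (∫ x, g x ∂μ) ≤ (∫ x, f' x ∂μ) * (∫ x, g' x ∂μ) := by
  have hsymm : ∀ u v : α → ℝ, Integrable u μ → Integrable v μ →
      Integrable (fun z => u z.1 * v z.2 + u z.2 * v z.1) (μ.prod μ) ∧
      ∫ z, u z.1 * v z.2 + u z.2 * v z.1 ∂μ.prod μ = 2 * ((∫ x, u x ∂μ) * (∫ x, v x ∂μ)) := by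
    intro u v hu hv
    have hswap : Integrable (fun z => u z.2 * v z.1) (μ.prod μ) :=
      (hv.mul_prod hu).congr (ae_of_all _ fun _ => mul_comm _ _)
    refine ⟨(hu.mul_prod hv).add hswap, ?_⟩
    rw [integral_add (hu.mul_prod hv) hswap, integral_prod_mul]
    simp_rw [mul_comm (u _)]
    rw [integral_prod_mul, mul_comm (∫ x, v x ∂μ), two_mul]
  have hint := integral_mono (hsymm f g hf hg).1 (hsymm f' g' hf' hg').1 fun z => h z.1 z.2
  rw [(hsymm f g hf hg).2, (hsymm f' g' hf' hg').2] at hint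
  linarith

end Integrals

lemma div_add_le_div_add {x t s : ℝ} (hx : 0 < x) (ht : 0 ≤ t) (hts : t ≤ s) :
    t / (x + t) ≤ s / (x + s) := by
  rw [div_le_div_iff₀ (by linarith) (by linarith)]
  nlinarith

lemma mul_rpow_div_add_add_le {x t s a : ℝ} (hx : 0 < x) (ht : 0 ≤ t) (hs : 0 ≤ s) (ha : 1 ≤ a) :
    t * (s / (x + s)) ^ a + s * (t / (x + t)) ^ a ≤
      t * (t / (x + t)) ^ (a - 1) * (s / (x + s)) + s * (s / (x + s)) ^ (a - 1) * (t / (x + t)) := by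
  have hmono : ∀ {t s : ℝ}, 0 ≤ t → t ≤ s → (t / (x + t)) ^ (a - 1) ≤ (s / (x + s)) ^ (a - 1) :=
    fun ht hts => Real.rpow_le_rpow (div_nonneg ht (by linarith)) (div_add_le_div_add hx ht hts)
      (by linarith)
  have hsign : 0 ≤ ((t / (x + t)) ^ (a - 1) - (s / (x + s)) ^ (a - 1)) * (t - s) := by
    rcases le_total t s with hts | hst
    · exact mul_nonneg_of_nonpos_of_nonpos (sub_nonpos.2 (hmono ht hts)) (sub_nonpos.2 hts)
    · exact mul_nonneg (sub_nonneg.2 (hmono hs hst)) (sub_nonneg.2 hst)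
  set u := t / (x + t) with hu
  set v := s / (x + s) with hv
  have hu0 : 0 ≤ u := div_nonneg ht (by linarith)
  have hv0 : 0 ≤ v := div_nonneg hs (by linarith)
  have htu : t = u * (x + t) := by rw [hu, div_mul_cancel₀ _ (by linarith)]
  have hsv : s = v * (x + s) := by rw [hv, div_mul_cancel₀ _ (by linarith)]
  have hpow : ∀ w : ℝ, 0 ≤ w → w ^ a = w * w ^ (a - 1) := fun w hw => by
    rw [← Real.rpow_one_add' hw (by linarith), add_sub_cancel]
  clear_value u v
  -- `t v - s u = u v (t - s)` because `t = u (x + t)` and `s = v (x + s)`.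
  have key : t * u ^ (a - 1) * v + s * v ^ (a - 1) * u - (t * v ^ a + s * u ^ a) =
      u * v * ((u ^ (a - 1) - v ^ (a - 1)) * (t - s)) := by
    rw [hpow u hu0, hpow v hv0]
    linear_combination (u ^ (a - 1) - v ^ (a - 1)) * (v * htu - u * hsv)
  rw [← sub_nonneg, key]
  exact mul_nonneg (mul_nonneg hu0 hv0) hsign

lemma div_rpow_le_div_rpow_of_mul_le {a A B I J : ℝ} (ha : 0 < a) (hA : 0 < A) (hB : 0 ≤ B)
    (hI : 0 ≤ I) (hJ : 0 ≤ J) (h : A * I ≤ J ^ (1 / a) * I ^ ((a - 1) / a) * B) :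
    I / B ^ a ≤ J / A ^ a := by
  rcases hI.eq_or_lt with rfl | hI
  · rw [zero_div]; positivity
  rcases hB.eq_or_lt with rfl | hB
  · rw [Real.zero_rpow ha.ne', div_zero]; positivity
  have hsplit : I = I ^ (1 / a) * I ^ ((a - 1) / a) := by
    rw [← Real.rpow_add hI, ← add_div, add_sub_cancel, div_self ha.ne', Real.rpow_one]
  have hroot : A * I ^ (1 / a) ≤ J ^ (1 / a) * B := by
    refine le_of_mul_le_mul_right ?_ (Real.rpow_pos_of_pos hI ((a - 1) / a))
    calc A * I ^ (1 / a) * I ^ ((a - 1) / a) = A * I := by rw [mul_assoc, ← hsplit]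
      _ ≤ J ^ (1 / a) * I ^ ((a - 1) / a) * B := h
      _ = J ^ (1 / a) * B * I ^ ((a - 1) / a) := by ring
  have hpow := Real.rpow_le_rpow (by positivity) hroot ha.le
  rw [Real.mul_rpow hA.le (by positivity), Real.mul_rpow (by positivity) hB.le,
    ← Real.rpow_mul hI.le, ← Real.rpow_mul hJ, one_div_mul_cancel ha.ne', Real.rpow_one,
    Real.rpow_one] at hpow
  rw [div_le_div_iff₀ (by positivity) (by positivity)]
  linarith

theorem stmt0 {Ω : Type*} [MeasurableSpace Ω] (μ : Measure Ω) [IsProbabilityMeasure μ]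
    (ξ : Ω → ℝ) (hmeas : Measurable ξ) (hpos : ∀ ω, 0 ≤ ξ ω)
    (a : ℝ) (ha : 1 < a)
    (hint : Integrable (fun ω => ξ ω ^ a) μ)
    (hmean : 0 < ∫ ω, ξ ω ∂μ) :
    ∀ x : ℝ, 0 < x →
      (∫ ω, (ξ ω / (x + ξ ω)) ^ a ∂μ) / (∫ ω, ξ ω / (x + ξ ω) ∂μ) ^ a ≤
        (∫ ω, ξ ω ^ a ∂μ) / (∫ ω, ξ ω ∂μ) ^ a := by
  intro x hx
  set η : Ω → ℝ := fun ω => ξ ω / (x + ξ ω)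
  have hη0 : ∀ ω, 0 ≤ η ω := fun ω => div_nonneg (hpos ω) (by linarith [hpos ω])
  have hη1 : ∀ ω, η ω ≤ 1 := fun ω => div_le_one_of_le₀ (by linarith) (by linarith [hpos ω])
  have hηm : Measurable η := hmeas.div (measurable_const.add hmeas)
  have hηpow_le : ∀ c : ℝ, 0 ≤ c → ∀ ω, ‖η ω ^ c‖ ≤ 1 := fun c hc ω => by
    rw [Real.norm_of_nonneg (Real.rpow_nonneg (hη0 ω) c)]
    exact Real.rpow_le_one (hη0 ω) (hη1 ω) hc
  have hξ : Integrable ξ μ :=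
    integrable_of_integrable_rpow ha.le (ae_of_all _ hpos) hmeas.aestronglyMeasurable hint
  have hη : Integrable η μ :=
    .of_bound hηm.aestronglyMeasurable 1
      (ae_of_all _ fun ω => (Real.norm_of_nonneg (hη0 ω)).trans_le (hη1 ω))
  have hηa : Integrable (fun ω => η ω ^ a) μ :=
    .of_bound (hηm.pow_const a).aestronglyMeasurable 1 (ae_of_all _ (hηpow_le a (by linarith)))
  have hξη : Integrable (fun ω => ξ ω * η ω ^ (a - 1)) μ :=
    hξ.mul_bdd (hηm.pow_const _).aestronglyMeasurable (ae_of_all _ (hηpow_le _ (by linarith)))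
  have hcheb : (∫ ω, ξ ω ∂μ) * (∫ ω, η ω ^ a ∂μ) ≤
      (∫ ω, ξ ω * η ω ^ (a - 1) ∂μ) * (∫ ω, η ω ∂μ) :=
    integral_mul_integral_le_of_forall_le hξ hηa hξη hη
      fun ω ω' => mul_rpow_div_add_add_le hx (hpos ω) (hpos ω') ha.le
  have hholder := integral_mul_rpow_sub_one_le ha (ae_of_all _ hpos) (ae_of_all _ hη0)
    hmeas.aemeasurable hηm.aemeasurable hint hηa
  refine div_rpow_le_div_rpow_of_mul_le (by linarith) hmean (integral_nonneg hη0)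
    (integral_nonneg fun ω => Real.rpow_nonneg (hη0 ω) a)
    (integral_nonneg fun ω => Real.rpow_nonneg (hpos ω) a) (hcheb.trans ?_)
  gcongr
  exact integral_nonneg hη0
end

section
/- Let ξ ≥ 0 be a random variable with E[ξ] ∈ (0,∞). Then for every λ ∈ [0,1] and every t ≥ 0, E[exp(−t·((λ+ξ)/(1+ξ))/E[(λ+ξ)/(1+ξ)])] ≤ E[exp(−t·ξ/E[ξ])]. -/
open MeasureTheory

private lemma exp_slope (t A B c : ℝ) (ht : 0 ≤ t)
    (h : (c ≤ A ∧ A ≤ B) ∨ (B ≤ A ∧ A ≤ c)) :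
    Real.exp (-(t * A)) + t * Real.exp (-(t * c)) * (A - B) ≤ Real.exp (-(t * B)) := by
  have base : Real.exp (-(t * A)) * ((-(t * B) - -(t * A)) + 1) ≤ Real.exp (-(t * B)) := by
    have h1 := Real.add_one_le_exp (-(t * B) - -(t * A))
    have h2 := mul_le_mul_of_nonneg_left h1 (Real.exp_pos (-(t * A))).le
    have h3 : -(t * A) + (-(t * B) - -(t * A)) = -(t * B) := by ring
    rwa [← Real.exp_add, h3] at h2
  rcases h with ⟨hcA, hAB⟩ | ⟨hBA, hAc⟩
  · have hE : Real.exp (-(t * A)) ≤ Real.exp (-(t * c)) :=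
      Real.exp_le_exp.mpr (by nlinarith)
    nlinarith [mul_nonneg (mul_nonneg ht (sub_nonneg.2 hAB)) (sub_nonneg.2 hE)]
  · have hE : Real.exp (-(t * c)) ≤ Real.exp (-(t * A)) :=
      Real.exp_le_exp.mpr (by nlinarith)
    nlinarith [mul_nonneg (mul_nonneg ht (sub_nonneg.2 hBA)) (sub_nonneg.2 hE)]

private lemma quad (a b l : ℝ) (ha : 0 < a) (hb : 0 < b) (hl0 : 0 ≤ l) :
    ∃ r : ℝ, 0 ≤ r ∧ ∀ x : ℝ, 0 ≤ x →
      (x ≤ r → a * (x * (1 + x)) ≤ b * (l + x)) ∧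
      (r ≤ x → b * (l + x) ≤ a * (x * (1 + x))) := by
  set s := Real.sqrt ((a - b) ^ 2 + 4 * a * b * l) with hs_def
  have hs0 : 0 ≤ s := Real.sqrt_nonneg _
  have hs2 : s ^ 2 = (a - b) ^ 2 + 4 * a * b * l := Real.sq_sqrt (by positivity)
  have habl : 0 ≤ 4 * a * b * l := by positivity
  have hsba : b - a ≤ s := by nlinarith
  have hsab : a - b ≤ s := by nlinarith
  have h2a : (0:ℝ) < 2 * a := by linarith
  refine ⟨(b - a + s) / (2 * a), div_nonneg (by linarith) (by linarith), ?_⟩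
  intro x hx
  constructor
  · intro hxr
    have h1 : x * (2 * a) ≤ b - a + s := (le_div_iff₀ h2a).1 hxr
    have hP : (2 * a * x - (b - a + s)) * (2 * a * x - (b - a - s)) ≤ 0 :=
      mul_nonpos_iff.mpr (Or.inr ⟨by linarith, by nlinarith [mul_nonneg ha.le hx]⟩)
    nlinarith [hP, hs2, ha, hx]
  · intro hrx
    have h1 : b - a + s ≤ x * (2 * a) := (div_le_iff₀ h2a).1 hrx
    have hP : 0 ≤ (2 * a * x - (b - a + s)) * (2 * a * x - (b - a - s)) :=
      mul_nonneg (by linarith) (by nlinarith [mul_nonneg ha.le hx])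
    nlinarith [hP, hs2, ha, hx]

private lemma pointwise_key (l t a b r x : ℝ) (hl0 : 0 ≤ l) (hl1 : l ≤ 1) (ht : 0 ≤ t)
    (ha : 0 < a) (hb : 0 < b) (hr : 0 ≤ r) (hx : 0 ≤ x)
    (hql : x ≤ r → a * (x * (1 + x)) ≤ b * (l + x))
    (hqr : r ≤ x → b * (l + x) ≤ a * (x * (1 + x))) :
    Real.exp (-(t * ((l + x) / (1 + x) / a))) +
      t * Real.exp (-(t * ((l + r) / (1 + r) / a))) * ((l + x) / (1 + x) / a - x / b) ≤
    Real.exp (-(t * (x / b))) := by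
  have h1x : (0:ℝ) < 1 + x := by linarith
  have h1r : (0:ℝ) < 1 + r := by linarith
  have hmono : ∀ u v : ℝ, 0 ≤ u → u ≤ v → (l + u) / (1 + u) ≤ (l + v) / (1 + v) := by
    intro u v hu huv
    rw [div_le_div_iff₀ (by linarith) (by linarith)]
    nlinarith [mul_nonneg (sub_nonneg.2 huv) (sub_nonneg.2 hl1)]
  rcases le_total x r with hxr | hrx
  · refine exp_slope t _ _ _ ht (Or.inr ⟨?_, ?_⟩)
    · rw [div_div, div_le_div_iff₀ hb (by positivity)]
      nlinarith [hql hxr]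
    · exact (div_le_div_iff_of_pos_right ha).2 (hmono x r hx hxr)
  · refine exp_slope t _ _ _ ht (Or.inl ⟨?_, ?_⟩)
    · exact (div_le_div_iff_of_pos_right ha).2 (hmono r x hr hrx)
    · rw [div_div, div_le_div_iff₀ (by positivity) hb]
      nlinarith [hqr hrx]

theorem stmt1 {Ω : Type*} [MeasurableSpace Ω] (μ : Measure Ω) [IsProbabilityMeasure μ]
    (ξ : Ω → ℝ) (hmeas : Measurable ξ) (hpos : ∀ ω, 0 ≤ ξ ω)
    (hint : Integrable ξ μ) (hmean : 0 < ∫ ω, ξ ω ∂μ) :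
    ∀ l ∈ Set.Icc (0 : ℝ) 1, ∀ t : ℝ, 0 ≤ t →
      (∫ ω, Real.exp (-t * ((l + ξ ω) / (1 + ξ ω)) /
          (∫ ω', (l + ξ ω') / (1 + ξ ω') ∂μ)) ∂μ) ≤
        ∫ ω, Real.exp (-t * ξ ω / (∫ ω', ξ ω' ∂μ)) ∂μ := by
  intro l hl t ht
  obtain ⟨hl0, hl1⟩ := hl
  have h1x : ∀ ω, (0:ℝ) < 1 + ξ ω := fun ω => by have := hpos ω; linarith
  have hFmeas : Measurable (fun ω => (l + ξ ω) / (1 + ξ ω)) :=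
    (measurable_const.add hmeas).div (measurable_const.add hmeas)
  have hF0 : ∀ ω, 0 ≤ (l + ξ ω) / (1 + ξ ω) := fun ω =>
    div_nonneg (by have := hpos ω; linarith) (h1x ω).le
  have hF1 : ∀ ω, (l + ξ ω) / (1 + ξ ω) ≤ 1 := fun ω =>
    (div_le_one (h1x ω)).2 (by linarith)
  have hFint : Integrable (fun ω => (l + ξ ω) / (1 + ξ ω)) μ := by
    refine Integrable.mono' (integrable_const 1) hFmeas.aestronglyMeasurable ?_
    filter_upwards with ω
    rw [Real.norm_eq_abs, abs_of_nonneg (hF0 ω)]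
    exact hF1 ω
  set b := ∫ ω', ξ ω' ∂μ with hb_def
  set a := ∫ ω', (l + ξ ω') / (1 + ξ ω') ∂μ with ha_def
  have hb : 0 < b := hmean
  have ha : 0 < a := by
    rw [ha_def, integral_pos_iff_support_of_nonneg hF0 hFint]
    have h1 := (integral_pos_iff_support_of_nonneg hpos hint).1 hmean
    refine lt_of_lt_of_le h1 (measure_mono ?_)
    intro ω hω
    have hxω : 0 < ξ ω := lt_of_le_of_ne (hpos ω) (Ne.symm hω)
    have : 0 < (l + ξ ω) / (1 + ξ ω) := div_pos (by linarith) (h1x ω)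
    exact this.ne'
  obtain ⟨r, hr0, hquad⟩ := quad a b l ha hb hl0
  have hkey : ∀ ω, Real.exp (-(t * ((l + ξ ω) / (1 + ξ ω) / a))) +
      (t * Real.exp (-(t * ((l + r) / (1 + r) / a)))) *
        ((l + ξ ω) / (1 + ξ ω) / a - ξ ω / b) ≤ Real.exp (-(t * (ξ ω / b))) := by
    intro ω
    exact pointwise_key l t a b r (ξ ω) hl0 hl1 ht ha hb hr0 (hpos ω)
      (fun h => ((hquad (ξ ω) (hpos ω)).1 h)) (fun h => ((hquad (ξ ω) (hpos ω)).2 h))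
  set K := t * Real.exp (-(t * ((l + r) / (1 + r) / a))) with hK_def
  have hXint : Integrable (fun ω => (l + ξ ω) / (1 + ξ ω) / a) μ := hFint.div_const a
  have hYint : Integrable (fun ω => ξ ω / b) μ := hint.div_const b
  have hexpX_int : Integrable (fun ω => Real.exp (-(t * ((l + ξ ω) / (1 + ξ ω) / a)))) μ := by
    refine Integrable.mono' (integrable_const 1)
      ((((hFmeas.div_const a).const_mul t).neg).exp).aestronglyMeasurable ?_
    filter_upwards with ω
    rw [Real.norm_eq_abs, abs_of_nonneg (Real.exp_pos _).le]
    refine Real.exp_le_one_iff.2 ?_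
    have : 0 ≤ t * ((l + ξ ω) / (1 + ξ ω) / a) :=
      mul_nonneg ht (div_nonneg (hF0 ω) ha.le)
    linarith
  have hexpY_int : Integrable (fun ω => Real.exp (-(t * (ξ ω / b)))) μ := by
    refine Integrable.mono' (integrable_const 1)
      ((((hmeas.div_const b).const_mul t).neg).exp).aestronglyMeasurable ?_
    filter_upwards with ω
    rw [Real.norm_eq_abs, abs_of_nonneg (Real.exp_pos _).le]
    refine Real.exp_le_one_iff.2 ?_
    have : 0 ≤ t * (ξ ω / b) := mul_nonneg ht (div_nonneg (hpos ω) hb.le)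
    linarith
  have h2int : Integrable (fun ω => K * ((l + ξ ω) / (1 + ξ ω) / a - ξ ω / b)) μ := by
    exact (hXint.sub hYint).const_mul K
  have hsum_int : Integrable (fun ω => Real.exp (-(t * ((l + ξ ω) / (1 + ξ ω) / a))) +
      K * ((l + ξ ω) / (1 + ξ ω) / a - ξ ω / b)) μ := hexpX_int.add h2int
  have hle := integral_mono hsum_int hexpY_int hkey
  have hIX : ∫ ω, (l + ξ ω) / (1 + ξ ω) / a ∂μ = 1 := by
    rw [integral_div, ← ha_def, div_self ha.ne']
  have hIY : ∫ ω, ξ ω / b ∂μ = 1 := by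
    rw [integral_div, ← hb_def, div_self hb.ne']
  have hsum_eq : ∫ ω, (Real.exp (-(t * ((l + ξ ω) / (1 + ξ ω) / a))) +
      K * ((l + ξ ω) / (1 + ξ ω) / a - ξ ω / b)) ∂μ =
      ∫ ω, Real.exp (-(t * ((l + ξ ω) / (1 + ξ ω) / a))) ∂μ := by
    rw [integral_add hexpX_int h2int, integral_const_mul,
      integral_sub hXint hYint, hIX, hIY]
    ring
  have hfinal : ∫ ω, Real.exp (-(t * ((l + ξ ω) / (1 + ξ ω) / a))) ∂μ ≤
      ∫ ω, Real.exp (-(t * (ξ ω / b))) ∂μ := by rw [← hsum_eq]; exact hle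
  have e1 : ∀ ω : Ω, -t * ((l + ξ ω) / (1 + ξ ω)) / a = -(t * ((l + ξ ω) / (1 + ξ ω) / a)) :=
    fun ω => by ring
  have e2 : ∀ ω : Ω, -t * ξ ω / b = -(t * (ξ ω / b)) := fun ω => by ring
  simpa only [e1, e2] using hfinal
end

section
/- Let ξ ≥ 0 be a random variable with E[ξ] ∈ (0,∞). For every t ≥ 0, the map x ↦ E[exp(−t·((x+ξ)/(1+ξ))/E[(x+ξ)/(1+ξ)])] is non-increasing on (0,1). -/
/-! Put `a = (1 + ξ)⁻¹` and `A = E[a]`. The normalized ratio is `1 + c(x) W` with `W = A - a`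
and `c(x) = (1 - x) / (1 - (1 - x) A)`, which decreases on `(0, 1)`. Since `E[W] = 0` and
`f z = exp (-t z)` is convex, `c ↦ E[f (1 + c W)]` increases on `[0, ∞)`: for `0 ≤ c₁ ≤ c₂`,
`1 + c₁ W` is a convex combination of `1` and `1 + c₂ W`, and `f 1 ≤ E[f (1 + c₂ W)]` by Jensen. -/

open MeasureTheory Set

theorem ConvexOn.monotoneOn_integral_comp_add_mul {Ω : Type*} [MeasurableSpace Ω]
    {μ : Measure Ω} [IsProbabilityMeasure μ] {f : ℝ → ℝ} (hf : ConvexOn ℝ univ f)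
    (hfc : Continuous f) {W : Ω → ℝ} (hW : Integrable W μ) (hW0 : ∫ ω, W ω ∂μ = 0) (m : ℝ)
    (hfi : ∀ c, 0 ≤ c → Integrable (fun ω => f (m + c * W ω)) μ) :
    MonotoneOn (fun c => ∫ ω, f (m + c * W ω) ∂μ) (Ici 0) := by
  intro c₁ hc₁ c₂ hc₂ hc
  simp only [mem_Ici] at hc₁ hc₂
  rcases hc₂.eq_or_lt with rfl | hc₂
  · rw [le_antisymm hc hc₁]
  have jensen : f m ≤ ∫ ω, f (m + c₂ * W ω) ∂μ := by
    have hint : Integrable (fun ω => m + c₂ * W ω) μ := (integrable_const m).add (hW.const_mul c₂)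
    have := hf.map_integral_le hfc.continuousOn isClosed_univ (by simp) hint (hfi c₂ hc₂.le)
    rwa [integral_add (integrable_const m) (hW.const_mul c₂), integral_const_mul, hW0,
      integral_const, probReal_univ, one_smul, mul_zero, add_zero] at this
  set r := c₁ / c₂
  have hr0 : 0 ≤ r := div_nonneg hc₁ hc₂.le
  have hr1 : r ≤ 1 := div_le_one_of_le₀ hc hc₂.le
  have chord : ∀ ω, f (m + c₁ * W ω) ≤ (1 - r) * f m + r * f (m + c₂ * W ω) := by
    intro ω
    have hcomb : (1 - r) • m + r • (m + c₂ * W ω) = m + c₁ * W ω := by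
      simp only [smul_eq_mul, r]
      field_simp
      ring
    have := hf.2 (mem_univ m) (mem_univ (m + c₂ * W ω)) (sub_nonneg.2 hr1) hr0 (by ring)
    rwa [hcomb, smul_eq_mul, smul_eq_mul] at this
  calc ∫ ω, f (m + c₁ * W ω) ∂μ
      ≤ ∫ ω, ((1 - r) * f m + r * f (m + c₂ * W ω)) ∂μ :=
        integral_mono (hfi c₁ hc₁) ((integrable_const _).add ((hfi c₂ hc₂.le).const_mul r)) chord
    _ = (1 - r) * f m + r * ∫ ω, f (m + c₂ * W ω) ∂μ := by
        rw [integral_add (integrable_const _) ((hfi c₂ hc₂.le).const_mul r), integral_const_mul r,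
          integral_const, probReal_univ, one_smul]
    _ ≤ ∫ ω, f (m + c₂ * W ω) ∂μ := by nlinarith

theorem integrable_exp_mul_one_add_mul {Ω : Type*} [MeasurableSpace Ω] {μ : Measure Ω}
    [IsFiniteMeasure μ] {W : Ω → ℝ} (hW : Measurable W) (hW₁ : ∀ ω, |W ω| ≤ 1) (s : ℝ) {c : ℝ}
    (hc : 0 ≤ c) : Integrable (fun ω => Real.exp (s * (1 + c * W ω))) μ :=
  .of_bound (by fun_prop) (Real.exp (|s| * (1 + c))) <| ae_of_all _ fun ω => by
    have h : |1 + c * W ω| ≤ 1 + c := by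
      have := abs_le.1 (hW₁ ω)
      exact abs_le.2 ⟨by nlinarith, by nlinarith⟩
    rw [Real.norm_eq_abs, Real.abs_exp]
    refine Real.exp_le_exp.2 ((le_abs_self _).trans ?_)
    rw [abs_mul]
    gcongr

theorem antitoneOn_one_sub_div_one_sub_one_sub_mul {A : ℝ} (hA : A ≤ 1) :
    AntitoneOn (fun x : ℝ => (1 - x) / (1 - (1 - x) * A)) (Ioo 0 1) := by
  rintro x ⟨hx₀, hx₁⟩ y ⟨hy₀, hy₁⟩ hxy
  have hx : 0 < 1 - (1 - x) * A := by nlinarith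
  have hy : 0 < 1 - (1 - y) * A := by nlinarith
  rw [div_le_div_iff₀ hy hx]
  nlinarith

theorem add_div_one_add_div_one_sub_mul_eq (x ξ A : ℝ) (hξ : 1 + ξ ≠ 0)
    (hd : 1 - (1 - x) * A ≠ 0) :
    (x + ξ) / (1 + ξ) / (1 - (1 - x) * A) =
      1 + (1 - x) / (1 - (1 - x) * A) * (A - (1 + ξ)⁻¹) := by
  field_simp
  ring

theorem integrable_inv_one_add {Ω : Type*} [MeasurableSpace Ω] {μ : Measure Ω}
    [IsFiniteMeasure μ] {ξ : Ω → ℝ} (hmeas : Measurable ξ) (hpos : ∀ ω, 0 ≤ ξ ω) :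
    Integrable (fun ω => (1 + ξ ω)⁻¹) μ :=
  .of_bound (hmeas.const_add 1).inv.aestronglyMeasurable 1 <| ae_of_all _ fun ω => by
    rw [Real.norm_eq_abs, abs_inv, abs_of_nonneg (by linarith [hpos ω])]
    exact inv_le_one_of_one_le₀ (by linarith [hpos ω])

theorem integral_add_div_one_add {Ω : Type*} [MeasurableSpace Ω] {μ : Measure Ω}
    [IsProbabilityMeasure μ] {ξ : Ω → ℝ} (hmeas : Measurable ξ) (hpos : ∀ ω, 0 ≤ ξ ω) (x : ℝ) :
    ∫ ω, (x + ξ ω) / (1 + ξ ω) ∂μ = 1 - (1 - x) * ∫ ω, (1 + ξ ω)⁻¹ ∂μ := by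
  have hrw : ∀ ω, (x + ξ ω) / (1 + ξ ω) = 1 - (1 - x) * (1 + ξ ω)⁻¹ := fun ω => by
    field_simp [show 1 + ξ ω ≠ 0 by linarith [hpos ω]]
    ring
  simp_rw [hrw]
  rw [integral_sub (integrable_const 1) ((integrable_inv_one_add hmeas hpos).const_mul _),
    integral_const_mul, integral_const, probReal_univ, one_smul]

theorem integral_inv_one_add_mem_Icc {Ω : Type*} [MeasurableSpace Ω] {μ : Measure Ω}
    [IsProbabilityMeasure μ] {ξ : Ω → ℝ} (hmeas : Measurable ξ) (hpos : ∀ ω, 0 ≤ ξ ω) :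
    ∫ ω, (1 + ξ ω)⁻¹ ∂μ ∈ Icc 0 1 :=
  ⟨integral_nonneg fun ω => (inv_pos.2 (by linarith [hpos ω])).le, by
    simpa using integral_mono (integrable_inv_one_add (μ := μ) hmeas hpos) (integrable_const 1)
      fun ω => inv_le_one_of_one_le₀ (by linarith [hpos ω])⟩

theorem integral_exp_div_integral_add_div_one_add {Ω : Type*} [MeasurableSpace Ω]
    {μ : Measure Ω} [IsProbabilityMeasure μ] {ξ : Ω → ℝ} (hmeas : Measurable ξ)
    (hpos : ∀ ω, 0 ≤ ξ ω) (t : ℝ) {x : ℝ} (hx : x ∈ Ioo 0 1) :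
    let A := ∫ ω, (1 + ξ ω)⁻¹ ∂μ
    ∫ ω, Real.exp (-t * ((x + ξ ω) / (1 + ξ ω)) / (∫ ω', (x + ξ ω') / (1 + ξ ω') ∂μ)) ∂μ =
      ∫ ω, Real.exp (-t * (1 + (1 - x) / (1 - (1 - x) * A) * (A - (1 + ξ ω)⁻¹))) ∂μ := by
  intro A
  have hA := integral_inv_one_add_mem_Icc (μ := μ) hmeas hpos
  have hd : 1 - (1 - x) * A ≠ 0 := by nlinarith [hx.1, hx.2, hA.1, hA.2]
  rw [integral_add_div_one_add hmeas hpos x]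
  congr 1 with ω
  rw [mul_div_assoc, add_div_one_add_div_one_sub_mul_eq x (ξ ω) A (by linarith [hpos ω]) hd]

theorem stmt2_general {Ω : Type*} [MeasurableSpace Ω] (μ : Measure Ω) [IsProbabilityMeasure μ]
    (ξ : Ω → ℝ) (hmeas : Measurable ξ) (hpos : ∀ ω, 0 ≤ ξ ω)
    (t : ℝ) :
    AntitoneOn (fun x : ℝ =>
        ∫ ω, Real.exp (-t * ((x + ξ ω) / (1 + ξ ω)) /
          (∫ ω', (x + ξ ω') / (1 + ξ ω') ∂μ)) ∂μ)
      (Set.Ioo 0 1) := by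
  set A := ∫ ω, (1 + ξ ω)⁻¹ ∂μ
  have hint := integrable_inv_one_add (μ := μ) hmeas hpos
  have hA : A ∈ Icc 0 1 := integral_inv_one_add_mem_Icc hmeas hpos
  have hW₁ : ∀ ω, |A - (1 + ξ ω)⁻¹| ≤ 1 := fun ω => by
    have : 0 < (1 + ξ ω)⁻¹ := inv_pos.2 (by linarith [hpos ω])
    have : (1 + ξ ω)⁻¹ ≤ 1 := inv_le_one_of_one_le₀ (by linarith [hpos ω])
    exact abs_sub_le_iff.2 ⟨by linarith [hA.2], by linarith [hA.1]⟩
  have hW₀ : ∫ ω, (A - (1 + ξ ω)⁻¹) ∂μ = 0 := by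
    rw [integral_sub (integrable_const A) hint, integral_const, probReal_univ, one_smul, sub_self]
  have hconv : ConvexOn ℝ univ fun z => Real.exp (-t * z) :=
    convexOn_exp.comp_linearMap (LinearMap.mul ℝ ℝ (-t))
  have hφ := hconv.monotoneOn_integral_comp_add_mul (W := fun ω => A - (1 + ξ ω)⁻¹)
    (by fun_prop) ((integrable_const A).sub hint) hW₀ 1
    fun c hc => integrable_exp_mul_one_add_mul (by fun_prop) hW₁ (-t) hc
  have hc : ∀ x ∈ Ioo (0 : ℝ) 1, (1 - x) / (1 - (1 - x) * A) ∈ Ici 0 := fun x hx =>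
    mem_Ici.2 (div_nonneg (by linarith [hx.2]) (by nlinarith [hx.1, hx.2, hA.2]))
  intro x hx y hy hxy
  simp only [integral_exp_div_integral_add_div_one_add hmeas hpos t hx,
    integral_exp_div_integral_add_div_one_add hmeas hpos t hy]
  exact hφ (hc y hy) (hc x hx) (antitoneOn_one_sub_div_one_sub_one_sub_mul hA.2 hx hy hxy)

theorem stmt2 {Ω : Type*} [MeasurableSpace Ω] (μ : Measure Ω) [IsProbabilityMeasure μ]
    (ξ : Ω → ℝ) (hmeas : Measurable ξ) (hpos : ∀ ω, 0 ≤ ξ ω)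
    (hint : Integrable ξ μ) (hmean : 0 < ∫ ω, ξ ω ∂μ)
    (t : ℝ) (ht : 0 ≤ t) :
    AntitoneOn (fun x : ℝ =>
        ∫ ω, Real.exp (-t * ((x + ξ ω) / (1 + ξ ω)) /
          (∫ ω', (x + ξ ω') / (1 + ξ ω') ∂μ)) ∂μ)
      (Set.Ioo 0 1) :=
  stmt2_general μ ξ hmeas hpos t
end

section
/- Let ξ ≥ 0 be a random variable with E[ξ] ∈ (0,∞). For every t ≥ 0, the map x ↦ E[exp(−t·(ξ/(1+xξ))/E[ξ/(1+xξ)])] is non-increasing on (0,1). -/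
/-!
Write `S_x := ξ / (1 + x ξ) / E[ξ / (1 + x ξ)]` (`normalizedTilt μ ξ x`), a variable of mean
one. For `0 < x < y` one has `S_y = c S_x / (1 + d S_x)` with `d > 0`, and this Möbius map
moves every `s ≥ 0` towards its fixed point `a = (c - 1) / d`, so `S_y` lies between `S_x`
and `a`. For convex differentiable `f`, monotonicity of `f'` then gives the pointwise bound
`f (S_y) ≤ f (S_x) + f' a * (S_y - S_x)`, whose linear term has expectation zero. The theorem
is the case `f s = exp (-t s)`.
-/

open MeasureTheory Set

lemma ConvexOn.le_add_deriv_mul_sub_of_mem_uIcc {f : ℝ → ℝ} (hf : ConvexOn ℝ univ f)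
    (hfd : Differentiable ℝ f) {s v a : ℝ} (hv : v ∈ uIcc s a) :
    f v ≤ f s + deriv f a * (v - s) := by
  have hmono := hf.monotoneOn_deriv fun z _ => hfd z
  rcases mem_uIcc.mp hv with ⟨hsv, hva⟩ | ⟨hav, hvs⟩
  · obtain rfl | hsv := hsv.eq_or_lt
    · simp
    have hslope : slope f s v ≤ deriv f a :=
      (hf.slope_le_deriv trivial trivial hsv (hfd v)).trans (hmono trivial trivial hva)
    rw [slope_def_field, div_le_iff₀ (sub_pos.mpr hsv)] at hslope
    linarith
  · obtain rfl | hvs := hvs.eq_or_lt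
    · simp
    have hslope : deriv f a ≤ slope f v s :=
      (hmono trivial trivial hav).trans (hf.deriv_le_slope trivial trivial hvs (hfd v))
    rw [slope_def_field, le_div_iff₀ (sub_pos.mpr hvs)] at hslope
    linarith

lemma mul_div_one_add_mul_mem_uIcc {c d s : ℝ} (hd : 0 < d) (hs : 0 ≤ s) :
    c * s / (1 + d * s) ∈ uIcc s ((c - 1) / d) := by
  have hden : 0 < 1 + d * s := by positivity
  rcases le_total (d * s) (c - 1) with h | h
  · refine mem_uIcc.mpr (Or.inl ⟨?_, ?_⟩)
    · rw [le_div_iff₀ hden]; nlinarith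
    · rw [div_le_div_iff₀ hden hd]; nlinarith
  · refine mem_uIcc.mpr (Or.inr ⟨?_, ?_⟩)
    · rw [div_le_div_iff₀ hd hden]; nlinarith
    · rw [div_le_iff₀ hden]; nlinarith

section

variable {Ω : Type*} [MeasurableSpace Ω] {μ : Measure Ω}

lemma ConvexOn.integral_comp_le_of_forall_mem_uIcc {f : ℝ → ℝ}
    (hf : ConvexOn ℝ univ f) (hfd : Differentiable ℝ f) {S V : Ω → ℝ} {a : ℝ}
    (hmem : ∀ ω, V ω ∈ uIcc (S ω) a)
    (hS : Integrable S μ) (hV : Integrable V μ) (hfS : Integrable (fun ω => f (S ω)) μ)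
    (hfV : Integrable (fun ω => f (V ω)) μ) (hSV : ∫ ω, V ω ∂μ = ∫ ω, S ω ∂μ) :
    ∫ ω, f (V ω) ∂μ ≤ ∫ ω, f (S ω) ∂μ := by
  have hK : Integrable (fun ω => deriv f a * (V ω - S ω)) μ := (hV.sub hS).const_mul _
  calc ∫ ω, f (V ω) ∂μ ≤ ∫ ω, (f (S ω) + deriv f a * (V ω - S ω)) ∂μ :=
        integral_mono hfV (hfS.add hK) fun ω =>
          hf.le_add_deriv_mul_sub_of_mem_uIcc hfd (hmem ω)
    _ = ∫ ω, f (S ω) ∂μ + deriv f a * ((∫ ω, V ω ∂μ) - ∫ ω, S ω ∂μ) := by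
        rw [integral_add hfS hK, integral_const_mul, integral_sub hV hS]
    _ = ∫ ω, f (S ω) ∂μ := by rw [hSV, sub_self, mul_zero, add_zero]

variable {ξ : Ω → ℝ}

noncomputable def normalizedTilt (μ : Measure Ω) (ξ : Ω → ℝ) (x : ℝ) (ω : Ω) : ℝ :=
  ξ ω / (1 + x * ξ ω) / ∫ ω', ξ ω' / (1 + x * ξ ω') ∂μ

lemma integrable_div_one_add_mul (hpos : ∀ ω, 0 ≤ ξ ω) (hint : Integrable ξ μ) {x : ℝ}
    (hx : 0 ≤ x) : Integrable (fun ω => ξ ω / (1 + x * ξ ω)) μ := by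
  refine hint.mono (hint.aemeasurable.div (aemeasurable_const.add
    (aemeasurable_const.mul hint.aemeasurable))).aestronglyMeasurable (ae_of_all _ fun ω => ?_)
  have := hpos ω
  rw [Real.norm_of_nonneg this, Real.norm_of_nonneg (by positivity)]
  exact div_le_self this (by nlinarith)

lemma integral_div_one_add_mul_pos (hpos : ∀ ω, 0 ≤ ξ ω) (hint : Integrable ξ μ)
    (hmean : 0 < ∫ ω, ξ ω ∂μ) {x : ℝ} (hx : 0 ≤ x) :
    0 < ∫ ω, ξ ω / (1 + x * ξ ω) ∂μ := by
  have hden (ω : Ω) : 0 < 1 + x * ξ ω := by nlinarith [hpos ω]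
  rw [integral_pos_iff_support_of_nonneg (fun ω => div_nonneg (hpos ω) (hden ω).le)
    (integrable_div_one_add_mul hpos hint hx), Function.support_div,
    Function.support_eq_univ (fun ω => (hden ω).ne'), inter_univ,
    ← integral_pos_iff_support_of_nonneg hpos hint]
  exact hmean

lemma normalizedTilt_nonneg (hpos : ∀ ω, 0 ≤ ξ ω) {x : ℝ} (hx : 0 ≤ x) (ω : Ω) :
    0 ≤ normalizedTilt μ ξ x ω := by
  have hnonneg (ω : Ω) : 0 ≤ ξ ω / (1 + x * ξ ω) := by have := hpos ω; positivity
  exact div_nonneg (hnonneg ω) (integral_nonneg hnonneg)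

lemma normalizedTilt_le (hpos : ∀ ω, 0 ≤ ξ ω) (hint : Integrable ξ μ)
    (hmean : 0 < ∫ ω, ξ ω ∂μ) {x : ℝ} (hx : 0 < x) (ω : Ω) :
    normalizedTilt μ ξ x ω ≤ 1 / (x * ∫ ω', ξ ω' / (1 + x * ξ ω') ∂μ) := by
  have hm := integral_div_one_add_mul_pos hpos hint hmean hx.le
  have := hpos ω
  rw [normalizedTilt, one_div, mul_inv, div_eq_mul_inv _ (∫ _, _ ∂μ)]
  gcongr
  rw [div_le_iff₀ (by positivity)]
  field_simp
  linarith

lemma integral_normalizedTilt (hpos : ∀ ω, 0 ≤ ξ ω) (hint : Integrable ξ μ)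
    (hmean : 0 < ∫ ω, ξ ω ∂μ) {x : ℝ} (hx : 0 ≤ x) :
    ∫ ω, normalizedTilt μ ξ x ω ∂μ = 1 := by
  simp only [normalizedTilt]
  rw [integral_div, div_self (integral_div_one_add_mul_pos hpos hint hmean hx).ne']

lemma integrable_normalizedTilt (hpos : ∀ ω, 0 ≤ ξ ω) (hint : Integrable ξ μ) {x : ℝ}
    (hx : 0 ≤ x) : Integrable (normalizedTilt μ ξ x) μ :=
  (integrable_div_one_add_mul hpos hint hx).div_const _

lemma integrable_comp_normalizedTilt [IsFiniteMeasure μ] {f : ℝ → ℝ} (hf : Continuous f)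
    (hpos : ∀ ω, 0 ≤ ξ ω) (hint : Integrable ξ μ) (hmean : 0 < ∫ ω, ξ ω ∂μ) {x : ℝ}
    (hx : 0 < x) : Integrable (fun ω => f (normalizedTilt μ ξ x ω)) μ := by
  set b := 1 / (x * ∫ ω', ξ ω' / (1 + x * ξ ω') ∂μ)
  obtain ⟨C, hC⟩ := (isCompact_Icc (a := 0) (b := b)).exists_bound_of_continuousOn
    hf.continuousOn
  refine Integrable.of_bound (hf.comp_aestronglyMeasurable ?_) C (ae_of_all _ fun ω =>
    hC _ ⟨normalizedTilt_nonneg hpos hx.le ω, normalizedTilt_le hpos hint hmean hx ω⟩)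
  exact (integrable_normalizedTilt hpos hint hx.le).aestronglyMeasurable

lemma normalizedTilt_eq_mul_div_one_add_mul (hpos : ∀ ω, 0 ≤ ξ ω) (hint : Integrable ξ μ)
    (hmean : 0 < ∫ ω, ξ ω ∂μ) {x y : ℝ} (hx : 0 ≤ x) (hy : 0 ≤ y) (ω : Ω) :
    normalizedTilt μ ξ y ω =
      (∫ ω', ξ ω' / (1 + x * ξ ω') ∂μ) / (∫ ω', ξ ω' / (1 + y * ξ ω') ∂μ) *
        normalizedTilt μ ξ x ω /
        (1 + (y - x) * (∫ ω', ξ ω' / (1 + x * ξ ω') ∂μ) * normalizedTilt μ ξ x ω) := by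
  have hmx := (integral_div_one_add_mul_pos hpos hint hmean hx).ne'
  have hmy := (integral_div_one_add_mul_pos hpos hint hmean hy).ne'
  have hdx : 1 + x * ξ ω ≠ 0 := by nlinarith [hpos ω]
  have hdy : 1 + y * ξ ω ≠ 0 := by nlinarith [hpos ω]
  unfold normalizedTilt
  generalize ∫ ω', ξ ω' / (1 + x * ξ ω') ∂μ = mx at hmx ⊢
  generalize ∫ ω', ξ ω' / (1 + y * ξ ω') ∂μ = my at hmy ⊢
  have hden :
      1 + (y - x) * mx * (ξ ω / (1 + x * ξ ω) / mx) = (1 + y * ξ ω) / (1 + x * ξ ω) := by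
    field_simp
    ring
  rw [hden]
  field_simp
  rw [mul_div_mul_right _ _ (by rwa [mul_comm] : 1 + ξ ω * x ≠ 0)]

lemma exists_forall_normalizedTilt_mem_uIcc (hpos : ∀ ω, 0 ≤ ξ ω) (hint : Integrable ξ μ)
    (hmean : 0 < ∫ ω, ξ ω ∂μ) {x y : ℝ} (hx : 0 ≤ x) (hxy : x < y) :
    ∃ a, ∀ ω, normalizedTilt μ ξ y ω ∈ uIcc (normalizedTilt μ ξ x ω) a := by
  set mx := ∫ ω, ξ ω / (1 + x * ξ ω) ∂μ
  set my := ∫ ω, ξ ω / (1 + y * ξ ω) ∂μ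
  refine ⟨(mx / my - 1) / ((y - x) * mx), fun ω => ?_⟩
  rw [normalizedTilt_eq_mul_div_one_add_mul hpos hint hmean hx (hx.trans hxy.le) ω]
  exact mul_div_one_add_mul_mem_uIcc
    (mul_pos (sub_pos.2 hxy) (integral_div_one_add_mul_pos hpos hint hmean hx))
    (normalizedTilt_nonneg hpos hx ω)

theorem antitoneOn_integral_comp_normalizedTilt [IsFiniteMeasure μ] {f : ℝ → ℝ}
    (hf : ConvexOn ℝ univ f) (hfd : Differentiable ℝ f) (hpos : ∀ ω, 0 ≤ ξ ω)
    (hint : Integrable ξ μ) (hmean : 0 < ∫ ω, ξ ω ∂μ) :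
    AntitoneOn (fun x => ∫ ω, f (normalizedTilt μ ξ x ω) ∂μ) (Ioi 0) := by
  intro x hx y hy hxy
  obtain rfl | hxy := hxy.eq_or_lt
  · rfl
  obtain ⟨a, hmem⟩ := exists_forall_normalizedTilt_mem_uIcc hpos hint hmean hx.le hxy
  refine hf.integral_comp_le_of_forall_mem_uIcc hfd hmem
    (integrable_normalizedTilt hpos hint hx.le) (integrable_normalizedTilt hpos hint hy.le)
    (integrable_comp_normalizedTilt hfd.continuous hpos hint hmean hx)
    (integrable_comp_normalizedTilt hfd.continuous hpos hint hmean hy) ?_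
  rw [integral_normalizedTilt hpos hint hmean hx.le, integral_normalizedTilt hpos hint hmean hy.le]

end

theorem stmt3_general {Ω : Type*} [MeasurableSpace Ω] (μ : Measure Ω) [IsProbabilityMeasure μ]
    (ξ : Ω → ℝ) (hpos : ∀ ω, 0 ≤ ξ ω)
    (hint : Integrable ξ μ) (hmean : 0 < ∫ ω, ξ ω ∂μ)
    (t : ℝ) :
    AntitoneOn (fun x : ℝ =>
        ∫ ω, Real.exp (-t * (ξ ω / (1 + x * ξ ω)) /
          (∫ ω', ξ ω' / (1 + x * ξ ω') ∂μ)) ∂μ)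
      (Set.Ioo 0 1) := by
  have hconvex : ConvexOn ℝ univ fun s => Real.exp (-t * s) :=
    convexOn_exp.comp_linearMap (LinearMap.mul ℝ ℝ (-t))
  have hdiff : Differentiable ℝ fun s => Real.exp (-t * s) := by fun_prop
  simpa only [normalizedTilt, mul_div_assoc] using
    (antitoneOn_integral_comp_normalizedTilt hconvex hdiff hpos hint hmean).mono
      Ioo_subset_Ioi_self

theorem stmt3 {Ω : Type*} [MeasurableSpace Ω] (μ : Measure Ω) [IsProbabilityMeasure μ]
    (ξ : Ω → ℝ) (hmeas : Measurable ξ) (hpos : ∀ ω, 0 ≤ ξ ω)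
    (hint : Integrable ξ μ) (hmean : 0 < ∫ ω, ξ ω ∂μ)
    (t : ℝ) (ht : 0 ≤ t) :
    AntitoneOn (fun x : ℝ =>
        ∫ ω, Real.exp (-t * (ξ ω / (1 + x * ξ ω)) /
          (∫ ω', ξ ω' / (1 + x * ξ ω') ∂μ)) ∂μ)
      (Set.Ioo 0 1) :=
  stmt3_general μ ξ hpos hint hmean t
end

section
/- Let ξ₁, ξ₂ be independent nonnegative random variables with E[ξᵢ^a] < ∞ for some a ∈ [1,2]. Then E[(ξ₁+ξ₂)^a] ≤ E[ξ₁^a] + E[ξ₂^a] + (E[ξ₁] + E[ξ₂])^a. -/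
/-!
Put `r = a - 1 ∈ [0, 1]`. Pointwise, `(x + y)^a = (x + y)(x + y)^r ≤ (x + y)(x^r + y^r)` by
subadditivity of `t ↦ t^r`, which bounds `(ξ₁ + ξ₂)^a` by `ξ₁^a + ξ₂^a + ξ₁ ξ₂^r + ξ₂ ξ₁^r`.
By independence and Jensen's inequality for the concave map `t ↦ t^r`,
`E[ξ₁ ξ₂^r] = E[ξ₁] E[ξ₂^r] ≤ E[ξ₁] E[ξ₂]^r`, and for `s, t ≥ 0` one has
`s t^r + t s^r ≤ (s + t)(s + t)^r = (s + t)^a`.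
-/

open MeasureTheory ProbabilityTheory

section RpowInequalities

variable {x y a : ℝ}

lemma rpow_eq_mul_rpow_sub_one (hx : 0 ≤ x) (ha : a ≠ 0) : x ^ a = x * x ^ (a - 1) := by
  simpa using Real.rpow_one_add' hx (y := a - 1) (by simpa using ha)

lemma add_rpow_le_rpow_add_rpow_add_cross (hx : 0 ≤ x) (hy : 0 ≤ y) (ha1 : 1 ≤ a) (ha2 : a ≤ 2) :
    (x + y) ^ a ≤ x ^ a + y ^ a + (x * y ^ (a - 1) + y * x ^ (a - 1)) := by
  have hxy : 0 ≤ x + y := add_nonneg hx hy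
  calc (x + y) ^ a = (x + y) * (x + y) ^ (a - 1) := rpow_eq_mul_rpow_sub_one hxy (by linarith)
    _ ≤ (x + y) * (x ^ (a - 1) + y ^ (a - 1)) := by
      gcongr
      exact Real.rpow_add_le_add_rpow hx hy (by linarith) (by linarith)
    _ = x * x ^ (a - 1) + y * y ^ (a - 1) + (x * y ^ (a - 1) + y * x ^ (a - 1)) := by ring
    _ = x ^ a + y ^ a + (x * y ^ (a - 1) + y * x ^ (a - 1)) := by
      rw [← rpow_eq_mul_rpow_sub_one hx (by linarith), ← rpow_eq_mul_rpow_sub_one hy (by linarith)]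

lemma mul_rpow_sub_one_add_mul_rpow_sub_one_le (hx : 0 ≤ x) (hy : 0 ≤ y) (ha : 1 ≤ a) :
    x * y ^ (a - 1) + y * x ^ (a - 1) ≤ (x + y) ^ a := by
  have hr : 0 ≤ a - 1 := by linarith
  rw [rpow_eq_mul_rpow_sub_one (add_nonneg hx hy) (by linarith), add_mul]
  gcongr <;> linarith

lemma rpow_le_one_add_rpow {r : ℝ} (hx : 0 ≤ x) (hr : 0 ≤ r) (hra : r ≤ a) :
    x ^ r ≤ 1 + x ^ a := by
  rcases le_or_gt x 1 with h | h
  · linarith [Real.rpow_le_one hx h hr, Real.rpow_nonneg hx a]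
  · linarith [Real.rpow_le_rpow_of_exponent_le h.le hra]

end RpowInequalities

section Moments

variable {Ω : Type*} [MeasurableSpace Ω] {μ : Measure Ω} {ξ : Ω → ℝ} {r a : ℝ}

lemma integrable_rpow_of_le [IsFiniteMeasure μ] (hm : AEStronglyMeasurable ξ μ)
    (h0 : 0 ≤ᵐ[μ] ξ) (hr : 0 ≤ r) (hra : r ≤ a) (hi : Integrable (fun ω => ξ ω ^ a) μ) :
    Integrable (fun ω => ξ ω ^ r) μ := by
  refine ((integrable_const 1).add hi).mono'
    ((Real.continuous_rpow_const hr).comp_aestronglyMeasurable hm) ?_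
  filter_upwards [h0] with ω hω
  rw [Real.norm_of_nonneg (Real.rpow_nonneg hω r)]
  exact rpow_le_one_add_rpow hω hr hra

lemma integrable_of_integrable_rpow_s4 [IsFiniteMeasure μ] (hm : AEStronglyMeasurable ξ μ)
    (h0 : 0 ≤ᵐ[μ] ξ) (ha : 1 ≤ a) (hi : Integrable (fun ω => ξ ω ^ a) μ) : Integrable ξ μ := by
  simpa using integrable_rpow_of_le hm h0 zero_le_one ha hi

lemma integral_rpow_le_rpow_integral [IsProbabilityMeasure μ] (h0 : 0 ≤ᵐ[μ] ξ) (hr0 : 0 ≤ r)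
    (hr1 : r ≤ 1) (hi : Integrable ξ μ) (hir : Integrable (fun ω => ξ ω ^ r) μ) :
    ∫ ω, ξ ω ^ r ∂μ ≤ (∫ ω, ξ ω ∂μ) ^ r :=
  (Real.concaveOn_rpow hr0 hr1).le_map_integral (Real.continuous_rpow_const hr0).continuousOn
    isClosed_Ici h0 hi hir

lemma ProbabilityTheory.IndepFun.integrable_mul_rpow {η : Ω → ℝ} (hind : IndepFun ξ η μ)
    (hξ : Integrable ξ μ) (hηr : Integrable (fun ω => η ω ^ r) μ) :
    Integrable (fun ω => ξ ω * η ω ^ r) μ :=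
  (hind.comp measurable_id (measurable_id.pow_const r)).integrable_mul hξ hηr

lemma ProbabilityTheory.IndepFun.integral_mul_rpow_le [IsProbabilityMeasure μ] {η : Ω → ℝ}
    (hind : IndepFun ξ η μ) (hξ : AEStronglyMeasurable ξ μ) (hξ0 : 0 ≤ᵐ[μ] ξ)
    (hη0 : 0 ≤ᵐ[μ] η) (hr0 : 0 ≤ r) (hr1 : r ≤ 1) (hη : Integrable η μ)
    (hηr : Integrable (fun ω => η ω ^ r) μ) :
    ∫ ω, ξ ω * η ω ^ r ∂μ ≤ (∫ ω, ξ ω ∂μ) * (∫ ω, η ω ∂μ) ^ r := by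
  have hind' : IndepFun ξ (fun ω => η ω ^ r) μ :=
    hind.comp measurable_id (measurable_id.pow_const r)
  rw [hind'.integral_fun_mul_eq_mul_integral hξ hηr.aestronglyMeasurable]
  exact mul_le_mul_of_nonneg_left (integral_rpow_le_rpow_integral hη0 hr0 hr1 hη hηr)
    (integral_nonneg_of_ae hξ0)

end Moments

theorem stmt4 {Ω : Type*} [MeasurableSpace Ω] (μ : Measure Ω) [IsProbabilityMeasure μ]
    (ξ₁ ξ₂ : Ω → ℝ) (hm1 : Measurable ξ₁) (hm2 : Measurable ξ₂)
    (hp1 : ∀ ω, 0 ≤ ξ₁ ω) (hp2 : ∀ ω, 0 ≤ ξ₂ ω)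
    (a : ℝ) (ha1 : 1 ≤ a) (ha2 : a ≤ 2)
    (hi1 : Integrable (fun ω => ξ₁ ω ^ a) μ)
    (hi2 : Integrable (fun ω => ξ₂ ω ^ a) μ)
    (hind : IndepFun ξ₁ ξ₂ μ) :
    ∫ ω, (ξ₁ ω + ξ₂ ω) ^ a ∂μ ≤
      (∫ ω, ξ₁ ω ^ a ∂μ) + (∫ ω, ξ₂ ω ^ a ∂μ) +
        ((∫ ω, ξ₁ ω ∂μ) + (∫ ω, ξ₂ ω ∂μ)) ^ a := by
  have hr0 : 0 ≤ a - 1 := by linarith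
  have hr1 : a - 1 ≤ 1 := by linarith
  have h01 : 0 ≤ᵐ[μ] ξ₁ := ae_of_all _ hp1
  have h02 : 0 ≤ᵐ[μ] ξ₂ := ae_of_all _ hp2
  have hint1 := integrable_of_integrable_rpow_s4 hm1.aestronglyMeasurable h01 ha1 hi1
  have hint2 := integrable_of_integrable_rpow_s4 hm2.aestronglyMeasurable h02 ha1 hi2
  have hir1 := integrable_rpow_of_le hm1.aestronglyMeasurable h01 hr0 (by linarith) hi1
  have hir2 := integrable_rpow_of_le hm2.aestronglyMeasurable h02 hr0 (by linarith) hi2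
  have hcross12 := hind.integrable_mul_rpow hint1 hir2
  have hcross21 := hind.symm.integrable_mul_rpow hint2 hir1
  calc ∫ ω, (ξ₁ ω + ξ₂ ω) ^ a ∂μ
      ≤ ∫ ω, ξ₁ ω ^ a + ξ₂ ω ^ a + (ξ₁ ω * ξ₂ ω ^ (a - 1) + ξ₂ ω * ξ₁ ω ^ (a - 1)) ∂μ :=
        integral_mono_of_nonneg
          (ae_of_all _ fun ω => Real.rpow_nonneg (add_nonneg (hp1 ω) (hp2 ω)) a)
          ((hi1.add hi2).add (hcross12.add hcross21))
          (ae_of_all _ fun ω => add_rpow_le_rpow_add_rpow_add_cross (hp1 ω) (hp2 ω) ha1 ha2)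
    _ = (∫ ω, ξ₁ ω ^ a ∂μ) + (∫ ω, ξ₂ ω ^ a ∂μ) +
          ((∫ ω, ξ₁ ω * ξ₂ ω ^ (a - 1) ∂μ) + ∫ ω, ξ₂ ω * ξ₁ ω ^ (a - 1) ∂μ) := by
        rw [integral_add, integral_add hi1 hi2, integral_add hcross12 hcross21]
        exacts [hi1.add hi2, hcross12.add hcross21]
    _ ≤ (∫ ω, ξ₁ ω ^ a ∂μ) + (∫ ω, ξ₂ ω ^ a ∂μ) +
          ((∫ ω, ξ₁ ω ∂μ) * (∫ ω, ξ₂ ω ∂μ) ^ (a - 1) +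
            (∫ ω, ξ₂ ω ∂μ) * (∫ ω, ξ₁ ω ∂μ) ^ (a - 1)) := by
        gcongr
        · exact hind.integral_mul_rpow_le hm1.aestronglyMeasurable h01 h02 hr0 hr1 hint2 hir2
        · exact hind.symm.integral_mul_rpow_le hm2.aestronglyMeasurable h02 h01 hr0 hr1 hint1 hir1
    _ ≤ _ := by
        gcongr
        exact mul_rpow_sub_one_add_mul_rpow_sub_one_le (integral_nonneg hp1) (integral_nonneg hp2)
          ha1
end

section
/- Let ξ₁, …, ξ_k be independent nonnegative random variables with E[ξᵢ^a] < ∞ for some a ∈ [1,2]. Then E[(ξ₁+⋯+ξ_k)^a] ≤ Σᵢ E[ξᵢ^a] + (k−1)·(Σᵢ E[ξᵢ])^a. -/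
/-!
Write `(x + y) ^ a = (x + y) (x + y) ^ (a - 1)` and use subadditivity of `t ↦ t ^ (a - 1)`
(here `0 ≤ a - 1 ≤ 1`): `(x + y) ^ a ≤ x ^ a + y ^ a + x y ^ (a - 1) + y x ^ (a - 1)`.
For independent `X, Y ≥ 0` the cross terms factor, and Jensen for the concave map
`t ↦ t ^ (a - 1)` bounds them by `E X (E Y) ^ (a - 1) + E Y (E X) ^ (a - 1) ≤ (E X + E Y) ^ a`.
Hence `E (X + Y) ^ a ≤ E X ^ a + E Y ^ a + (E X + E Y) ^ a`, and induction on the number of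
summands, with `Y` the next summand, gives the claim.
-/

open MeasureTheory ProbabilityTheory

namespace Real

variable {x y a : ℝ}

lemma mul_rpow_sub_one_self (hx : 0 ≤ x) (ha : 1 ≤ a) : x * x ^ (a - 1) = x ^ a := by
  rw [← rpow_one_add' hx (by linarith), add_sub_cancel]

lemma add_rpow_le_rpow_add_rpow_add_cross (hx : 0 ≤ x) (hy : 0 ≤ y) (ha1 : 1 ≤ a)
    (ha2 : a ≤ 2) :
    (x + y) ^ a ≤ x ^ a + y ^ a + (x * y ^ (a - 1) + y * x ^ (a - 1)) := by
  have hxy : 0 ≤ x + y := add_nonneg hx hy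
  calc (x + y) ^ a = (x + y) * (x + y) ^ (a - 1) := (mul_rpow_sub_one_self hxy ha1).symm
    _ ≤ (x + y) * (x ^ (a - 1) + y ^ (a - 1)) :=
        mul_le_mul_of_nonneg_left (rpow_add_le_add_rpow hx hy (by linarith) (by linarith)) hxy
    _ = x * x ^ (a - 1) + y * y ^ (a - 1) + (x * y ^ (a - 1) + y * x ^ (a - 1)) := by ring
    _ = x ^ a + y ^ a + (x * y ^ (a - 1) + y * x ^ (a - 1)) := by
        rw [mul_rpow_sub_one_self hx ha1, mul_rpow_sub_one_self hy ha1]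

lemma cross_le_add_rpow (hx : 0 ≤ x) (hy : 0 ≤ y) (ha : 1 ≤ a) :
    x * y ^ (a - 1) + y * x ^ (a - 1) ≤ (x + y) ^ a := by
  have hxy : 0 ≤ x + y := add_nonneg hx hy
  have hy' : y ^ (a - 1) ≤ (x + y) ^ (a - 1) := rpow_le_rpow hy (by linarith) (by linarith)
  have hx' : x ^ (a - 1) ≤ (x + y) ^ (a - 1) := rpow_le_rpow hx (by linarith) (by linarith)
  calc x * y ^ (a - 1) + y * x ^ (a - 1) ≤ x * (x + y) ^ (a - 1) + y * (x + y) ^ (a - 1) := by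
        gcongr
    _ = (x + y) ^ a := by rw [← add_mul, mul_rpow_sub_one_self hxy ha]

end Real

namespace MeasureTheory

variable {Ω : Type*} [MeasurableSpace Ω] {μ : Measure Ω} {X : Ω → ℝ} {a b : ℝ}

lemma memLp_ofReal_of_integrable_rpow (hX : AEStronglyMeasurable X μ) (hX0 : 0 ≤ X)
    (ha : 0 < a) (hXa : Integrable (fun ω ↦ X ω ^ a) μ) : MemLp X (ENNReal.ofReal a) μ := by
  rw [← integrable_norm_rpow_iff hX (by simp [ha]) ENNReal.ofReal_ne_top,
    ENNReal.toReal_ofReal ha.le]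
  simpa only [Real.norm_eq_abs, abs_of_nonneg (hX0 _)] using hXa

lemma MemLp.integrable_rpow_of_le [IsFiniteMeasure μ] (hX : MemLp X (ENNReal.ofReal a) μ)
    (hX0 : 0 ≤ X) (hb : 0 ≤ b) (hba : b ≤ a) : Integrable (fun ω ↦ X ω ^ b) μ := by
  have := (hX.mono_exponent (ENNReal.ofReal_le_ofReal hba)).integrable_norm_rpow'
  simpa only [Real.norm_eq_abs, abs_of_nonneg (hX0 _), ENNReal.toReal_ofReal hb] using this

lemma integral_rpow_le_rpow_integral [IsProbabilityMeasure μ] (hX0 : 0 ≤ X) (hX : Integrable X μ)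
    (hXb : Integrable (fun ω ↦ X ω ^ b) μ) (hb0 : 0 ≤ b) (hb1 : b ≤ 1) :
    ∫ ω, X ω ^ b ∂μ ≤ (∫ ω, X ω ∂μ) ^ b :=
  (Real.concaveOn_rpow hb0 hb1).le_map_integral
    (Real.continuous_rpow_const hb0).continuousOn isClosed_Ici
    (ae_of_all _ hX0) hX hXb

end MeasureTheory

namespace ProbabilityTheory

variable {Ω : Type*} [MeasurableSpace Ω] {μ : Measure Ω} {X Y : Ω → ℝ} {a b : ℝ}

lemma IndepFun.integral_mul_rpow_le_s5 [IsProbabilityMeasure μ] (hXY : IndepFun X Y μ)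
    (hX0 : 0 ≤ X) (hY0 : 0 ≤ Y) (hX : Integrable X μ) (hY : Integrable Y μ)
    (hYb : Integrable (fun ω ↦ Y ω ^ b) μ) (hb0 : 0 ≤ b) (hb1 : b ≤ 1) :
    ∫ ω, X ω * Y ω ^ b ∂μ ≤ (∫ ω, X ω ∂μ) * (∫ ω, Y ω ∂μ) ^ b := by
  have hXYb : IndepFun X (fun ω ↦ Y ω ^ b) μ :=
    hXY.comp measurable_id (by fun_prop : Measurable fun t : ℝ ↦ t ^ b)
  rw [hXYb.integral_fun_mul_eq_mul_integral hX.1 hYb.1]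
  exact mul_le_mul_of_nonneg_left (integral_rpow_le_rpow_integral hY0 hY hYb hb0 hb1)
    (integral_nonneg hX0)

theorem IndepFun.integral_add_rpow_le [IsProbabilityMeasure μ] (hXY : IndepFun X Y μ)
    (hX0 : 0 ≤ X) (hY0 : 0 ≤ Y) (ha1 : 1 ≤ a) (ha2 : a ≤ 2)
    (hX : MemLp X (ENNReal.ofReal a) μ) (hY : MemLp Y (ENNReal.ofReal a) μ) :
    ∫ ω, (X ω + Y ω) ^ a ∂μ ≤
      ∫ ω, X ω ^ a ∂μ + ∫ ω, Y ω ^ a ∂μ + (∫ ω, X ω ∂μ + ∫ ω, Y ω ∂μ) ^ a := by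
  have hXa := hX.integrable_rpow_of_le hX0 (by linarith) le_rfl
  have hYa := hY.integrable_rpow_of_le hY0 (by linarith) le_rfl
  have hX1 : Integrable X μ := by
    simpa only [Real.rpow_one] using hX.integrable_rpow_of_le hX0 zero_le_one ha1
  have hY1 : Integrable Y μ := by
    simpa only [Real.rpow_one] using hY.integrable_rpow_of_le hY0 zero_le_one ha1
  have hXa1 := hX.integrable_rpow_of_le hX0 (by linarith) (by linarith : a - 1 ≤ a)
  have hYa1 := hY.integrable_rpow_of_le hY0 (by linarith) (by linarith : a - 1 ≤ a)
  have hXYa1 : Integrable (fun ω ↦ X ω * Y ω ^ (a - 1)) μ :=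
    (hXY.comp measurable_id (by fun_prop : Measurable fun t : ℝ ↦ t ^ (a - 1))).integrable_mul
      hX1 hYa1
  have hYXa1 : Integrable (fun ω ↦ Y ω * X ω ^ (a - 1)) μ :=
    (hXY.symm.comp measurable_id
      (by fun_prop : Measurable fun t : ℝ ↦ t ^ (a - 1))).integrable_mul hY1 hXa1
  have hpowers : Integrable (fun ω ↦ X ω ^ a + Y ω ^ a) μ := hXa.add hYa
  have hcross : Integrable (fun ω ↦ X ω * Y ω ^ (a - 1) + Y ω * X ω ^ (a - 1)) μ :=
    hXYa1.add hYXa1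
  calc ∫ ω, (X ω + Y ω) ^ a ∂μ
      ≤ ∫ ω, X ω ^ a + Y ω ^ a + (X ω * Y ω ^ (a - 1) + Y ω * X ω ^ (a - 1)) ∂μ :=
        integral_mono_of_nonneg
          (ae_of_all _ fun ω ↦ Real.rpow_nonneg (add_nonneg (hX0 ω) (hY0 ω)) a)
          (hpowers.add hcross)
          (ae_of_all _ fun ω ↦
            Real.add_rpow_le_rpow_add_rpow_add_cross (hX0 ω) (hY0 ω) ha1 ha2)
    _ = ∫ ω, X ω ^ a ∂μ + ∫ ω, Y ω ^ a ∂μ +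
          (∫ ω, X ω * Y ω ^ (a - 1) ∂μ + ∫ ω, Y ω * X ω ^ (a - 1) ∂μ) := by
        rw [integral_add hpowers hcross, integral_add hXa hYa,
          integral_add hXYa1 hYXa1]
    _ ≤ ∫ ω, X ω ^ a ∂μ + ∫ ω, Y ω ^ a ∂μ +
          ((∫ ω, X ω ∂μ) * (∫ ω, Y ω ∂μ) ^ (a - 1) +
            (∫ ω, Y ω ∂μ) * (∫ ω, X ω ∂μ) ^ (a - 1)) := by
        gcongr
        · exact hXY.integral_mul_rpow_le_s5 hX0 hY0 hX1 hY1 hYa1 (by linarith) (by linarith)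
        · exact hXY.symm.integral_mul_rpow_le_s5 hY0 hX0 hY1 hX1 hXa1 (by linarith) (by linarith)
    _ ≤ ∫ ω, X ω ^ a ∂μ + ∫ ω, Y ω ^ a ∂μ + (∫ ω, X ω ∂μ + ∫ ω, Y ω ∂μ) ^ a := by
        gcongr
        exact Real.cross_le_add_rpow (integral_nonneg hX0) (integral_nonneg hY0) ha1

theorem iIndepFun.integral_sum_rpow_le [IsProbabilityMeasure μ] {ι : Type*} {ξ : ι → Ω → ℝ}
    (hind : iIndepFun ξ μ) (hm : ∀ i, Measurable (ξ i)) (hp : ∀ i, 0 ≤ ξ i)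
    (ha1 : 1 ≤ a) (ha2 : a ≤ 2) (hξ : ∀ i, MemLp (ξ i) (ENNReal.ofReal a) μ)
    {s : Finset ι} (hs : s.Nonempty) :
    ∫ ω, (∑ i ∈ s, ξ i ω) ^ a ∂μ ≤
      ∑ i ∈ s, ∫ ω, ξ i ω ^ a ∂μ + ((s.card : ℝ) - 1) * (∑ i ∈ s, ∫ ω, ξ i ω ∂μ) ^ a := by
  induction hs using Finset.Nonempty.cons_induction with
  | singleton j => simp
  | cons j s hj hs ih =>
    have hS0 : 0 ≤ ∑ i ∈ s, ξ i := Finset.sum_nonneg fun i _ ↦ hp i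
    have hSa : MemLp (∑ i ∈ s, ξ i) (ENNReal.ofReal a) μ :=
      memLp_finsetSum' s fun i _ ↦ hξ i
    have hES : ∫ ω, ∑ i ∈ s, ξ i ω ∂μ = ∑ i ∈ s, ∫ ω, ξ i ω ∂μ :=
      integral_finsetSum s fun i _ ↦ (hξ i).integrable (ENNReal.one_le_ofReal.2 ha1)
    have hcard : (1 : ℝ) ≤ s.card := by exact_mod_cast hs.card_pos
    have hstep := (hind.indepFun_finsetSum_of_notMem hm hj).symm.integral_add_rpow_le
      (hp j) hS0 ha1 ha2 (hξ j) hSa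
    simp only [Finset.sum_apply, hES] at hstep
    set v := ∫ ω, ξ j ω ∂μ
    set m := ∑ i ∈ s, ∫ ω, ξ i ω ∂μ
    have hv0 : 0 ≤ v := integral_nonneg (hp j)
    have hm0 : 0 ≤ m := Finset.sum_nonneg fun i _ ↦ integral_nonneg (hp i)
    calc ∫ ω, (∑ i ∈ Finset.cons j s hj, ξ i ω) ^ a ∂μ
        ≤ ∫ ω, ξ j ω ^ a ∂μ + ∫ ω, (∑ i ∈ s, ξ i ω) ^ a ∂μ + (v + m) ^ a := by
          simpa only [Finset.sum_cons] using hstep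
      _ ≤ ∫ ω, ξ j ω ^ a ∂μ +
            (∑ i ∈ s, ∫ ω, ξ i ω ^ a ∂μ + ((s.card : ℝ) - 1) * (v + m) ^ a) + (v + m) ^ a := by
          gcongr
          refine ih.trans ?_
          gcongr
          linarith
      _ = _ := by
          rw [Finset.sum_cons, Finset.sum_cons, Finset.card_cons]
          push_cast
          ring

end ProbabilityTheory

theorem stmt5 {Ω : Type*} [MeasurableSpace Ω] (μ : Measure Ω) [IsProbabilityMeasure μ]
    (k : ℕ) (hk : 1 ≤ k) (ξ : Fin k → Ω → ℝ)
    (hm : ∀ i, Measurable (ξ i)) (hp : ∀ i ω, 0 ≤ ξ i ω)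
    (a : ℝ) (ha1 : 1 ≤ a) (ha2 : a ≤ 2)
    (hi : ∀ i, Integrable (fun ω => ξ i ω ^ a) μ)
    (hind : iIndepFun ξ μ) :
    ∫ ω, (∑ i, ξ i ω) ^ a ∂μ ≤
      (∑ i, ∫ ω, ξ i ω ^ a ∂μ) + ((k : ℝ) - 1) * (∑ i, ∫ ω, ξ i ω ∂μ) ^ a := by
  have hξ : ∀ i, MemLp (ξ i) (ENNReal.ofReal a) μ := fun i ↦
    memLp_ofReal_of_integrable_rpow (hm i).aestronglyMeasurable (hp i) (by linarith) (hi i)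
  have huniv : (Finset.univ : Finset (Fin k)).Nonempty := Finset.univ_nonempty_iff.2 ⟨⟨0, hk⟩⟩
  simpa using hind.integral_sum_rpow_le hm hp ha1 ha2 hξ huniv
end

section
/- Fix a > 1, K > 0, and constants c₁, c₂ > 0. Let (u_j)_{j≥1} be positive reals with u_j → 0, and (λ_j)_{j≥1} satisfy 0 ≤ λ_n ≤ K/n for all n. Assume that for all n ≥ 2 and all 1 ≤ j ≤ n−1, u_{j+1} ≥ λ_n + (1 − c₁λ_n)·u_j − c₂·u_j^a. Then there exists a constant c > 0 (independent of n and of (λ_j)) such that u_n ≥ c·(λ_n^{1/a} + n^{−1/(a−1)}) for all n ≥ 1. -/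
/-!
Once `u` stays in an interval `[0, ε]` with `ε` small (from some index `N` on), every map
`x ↦ l + (1 - c₁ l) x - c₂ x ^ a` with `c₁ l ≤ 1/2` is monotone on it, so `u` stays above any
sub-solution of the recursion that starts below it. Two sub-solutions do the job: the constant
`min (u N) ((λₙ / 2c₂) ^ (1/a))`, a sub-fixed point of the map with `l = λₙ`, and
`b k = β k ^ (-1/(a-1))`, which satisfies `b (k+1) ≤ b k - c₂ (b k) ^ a` by convexity of
`t ↦ t ^ (-1/(a-1))` once `β` is small. The finitely many indices below `N` only shrink the
constant.
-/

open Real Set Filter Topology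

theorem MonotoneOn.seq_le_seq_of_mem {α : Type*} [Preorder α] {f : α → α} {s : Set α}
    (hf : MonotoneOn f s) {x y : ℕ → α} {m n : ℕ} (hmn : m ≤ n) (h₀ : x m ≤ y m)
    (hxs : ∀ k ∈ Ico m n, x k ∈ s) (hys : ∀ k ∈ Ico m n, y k ∈ s)
    (hx : ∀ k ∈ Ico m n, x (k + 1) ≤ f (x k)) (hy : ∀ k ∈ Ico m n, f (y k) ≤ y (k + 1)) :
    x n ≤ y n := by
  induction n, hmn using Nat.le_induction with
  | base => exact h₀
  | succ n hmn ih =>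
    have hn : n ∈ Ico m (n + 1) := ⟨hmn, n.lt_succ_self⟩
    have sub : Ico m n ⊆ Ico m (n + 1) := Ico_subset_Ico_right n.le_succ
    have hxy : x n ≤ y n :=
      ih (fun k hk => hxs k (sub hk)) (fun k hk => hys k (sub hk))
        (fun k hk => hx k (sub hk)) (fun k hk => hy k (sub hk))
    exact (hx n hn).trans ((hf (hxs n hn) (hys n hn) hxy).trans (hy n hn))

lemma one_add_mul_sub_one_le_rpow_of_nonpos {t r : ℝ} (ht : 0 < t) (hr : r ≤ 0) :
    1 + r * (t - 1) ≤ t ^ r := by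
  have h := one_add_mul_self_le_rpow_one_add (s := t⁻¹ - 1) (by linarith [inv_pos.2 ht])
    (p := 1 - r) (by linarith)
  rw [add_sub_cancel, inv_rpow ht.le, ← rpow_neg ht.le, neg_sub] at h
  have key : t * t ^ (r - 1) = t ^ r := by
    rw [rpow_sub_one ht.ne']; field_simp
  calc 1 + r * (t - 1) = t * (1 + (1 - r) * (t⁻¹ - 1)) := by field_simp; ring
    _ ≤ t * t ^ (r - 1) := mul_le_mul_of_nonneg_left h ht.le
    _ = t ^ r := key

lemma rpow_neg_add_one_add_le {p j : ℝ} (hp : 0 ≤ p) (hj : 0 < j) :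
    (j + 1) ^ (-p) + p * (j + 1) ^ (-p - 1) ≤ j ^ (-p) := by
  have hj1 : 0 < j + 1 := by linarith
  have h := one_add_mul_sub_one_le_rpow_of_nonpos (div_pos hj hj1) (neg_nonpos.2 hp)
  rw [div_rpow hj.le hj1.le, rpow_neg hj1.le, div_inv_eq_mul] at h
  have e : (j + 1) ^ (-p - 1) = (j + 1) ^ (-p) / (j + 1) := by
    rw [rpow_sub_one hj1.ne']
  calc (j + 1) ^ (-p) + p * (j + 1) ^ (-p - 1)
      = (j + 1) ^ (-p) * (1 + -p * (j / (j + 1) - 1)) := by rw [e]; field_simp; ring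
    _ ≤ (j + 1) ^ (-p) * (j ^ (-p) * (j + 1) ^ p) := by gcongr
    _ = j ^ (-p) := by rw [rpow_neg hj1.le]; field_simp

lemma mul_rpow_neg_add_one_le {a c β j : ℝ} (ha : 1 < a) (hβ : 0 < β)
    (hβc : c * β ^ (a - 1) ≤ 1 / (a - 1) * 2 ^ (-(1 / (a - 1)) - 1)) (hj : 1 ≤ j) :
    β * (j + 1) ^ (-(1 / (a - 1))) ≤
      β * j ^ (-(1 / (a - 1))) - c * (β * j ^ (-(1 / (a - 1)))) ^ a := by
  set p := 1 / (a - 1) with hp_def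
  have hp : 0 < p := one_div_pos.2 (by linarith)
  have hj0 : 0 < j := by linarith
  have hpow : (β * j ^ (-p)) ^ a = β ^ (a - 1) * (β * j ^ (-p - 1)) := by
    rw [mul_rpow hβ.le (rpow_nonneg hj0.le _), ← rpow_mul hj0.le, rpow_sub_one hβ.ne']
    have hpa : p * (a - 1) = 1 := by rw [hp_def]; field_simp [show a - 1 ≠ 0 by linarith]
    rw [show -p * a = -p - 1 by linear_combination -hpa]; field_simp
  have hdouble : 2 ^ (-p - 1) * j ^ (-p - 1) ≤ (j + 1) ^ (-p - 1) := by
    rw [← mul_rpow zero_le_two hj0.le]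
    exact rpow_le_rpow_of_nonpos (by linarith) (by linarith) (by linarith)
  have htangent := rpow_neg_add_one_add_le hp.le hj0
  have hβj : 0 ≤ β * j ^ (-p - 1) := by positivity
  rw [hpow]
  nlinarith [mul_le_mul_of_nonneg_right hβc hβj, mul_le_mul_of_nonneg_left hdouble hp.le]

lemma monotoneOn_mul_sub_mul_rpow {a c κ ε : ℝ} (ha : 1 ≤ a) (hc : 0 ≤ c)
    (hκ : a * c * ε ^ (a - 1) ≤ κ) : MonotoneOn (fun x => κ * x - c * x ^ a) (Icc 0 ε) := by
  refine monotoneOn_of_hasDerivWithinAt_nonneg (f' := fun x => κ - c * (a * x ^ (a - 1)))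
    (convex_Icc 0 ε) ?_ (fun x hx => ?_) (fun x hx => ?_)
  · exact (continuous_const.mul continuous_id).continuousOn.sub
      (continuous_const.mul (continuous_rpow_const (by linarith))).continuousOn
  · rw [interior_Icc] at hx
    exact (((hasDerivAt_id x).const_mul κ).sub
      ((hasDerivAt_rpow_const (Or.inl hx.1.ne')).const_mul c)).hasDerivWithinAt.congr_deriv
      (by simp)
  · rw [interior_Icc] at hx
    have : x ^ (a - 1) ≤ ε ^ (a - 1) := rpow_le_rpow hx.1.le hx.2.le (by linarith)
    nlinarith [mul_le_mul_of_nonneg_left this (mul_nonneg (by linarith : (0:ℝ) ≤ a) hc)]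

lemma eventually_mul_rpow_le (c : ℝ) {r δ : ℝ} (hr : 0 < r) (hδ : 0 < δ) :
    ∀ᶠ x in 𝓝[>] (0 : ℝ), c * x ^ r ≤ δ := by
  have h : Tendsto (fun x : ℝ => c * x ^ r) (𝓝 0) (𝓝 (c * 0 ^ r)) :=
    (continuous_const.mul (continuous_rpow_const hr.le)).tendsto 0
  rw [zero_rpow hr.ne', mul_zero] at h
  exact nhdsWithin_le_nhds (h.eventually (eventually_le_nhds hδ))

lemma min_div_mul_le_min {β d x X : ℝ} (hβ : 0 ≤ β) (hx : 0 ≤ x) (hxX : x ≤ X) (hX : 0 < X) :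
    min (β / X) d * x ≤ min β (d * x) := by
  refine le_min ?_ (mul_le_mul_of_nonneg_right (min_le_right _ _) hx)
  calc min (β / X) d * x ≤ β / X * X :=
        mul_le_mul (min_le_left _ _) hxX hx (div_nonneg hβ hX.le)
    _ = β := div_mul_cancel₀ _ hX.ne'

lemma min_div_two_mul_add_le {c c' x y z : ℝ} (hx : 0 ≤ x) (hy : 0 ≤ y) (hxz : c * x ≤ z)
    (hyz : c' * y ≤ z) : min c c' / 2 * (x + y) ≤ z := by
  nlinarith [mul_le_mul_of_nonneg_right (min_le_left c c') hx,
    mul_le_mul_of_nonneg_right (min_le_right c c') hy]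

lemma min_rpow_le_of_step {a c₁ c₂ ε l : ℝ} {u : ℕ → ℝ} {N n : ℕ} (ha : 1 ≤ a) (hc₁ : 0 ≤ c₁)
    (hc₂ : 0 < c₂) (hε₁ : c₁ * ε ≤ 1 / 2) (hε₂ : a * c₂ * ε ^ (a - 1) ≤ 1 / 2) (hl : 0 ≤ l)
    (hc₁l : c₁ * l ≤ 1 / 2) (hu : ∀ k, N ≤ k → u k ∈ Icc 0 ε)
    (hstep : ∀ k ∈ Ico N n, l + (1 - c₁ * l) * u k - c₂ * u k ^ a ≤ u (k + 1)) (hNn : N ≤ n) :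
    min (u N) ((l / (2 * c₂)) ^ (1 / a)) ≤ u n := by
  set s := min (u N) ((l / (2 * c₂)) ^ (1 / a))
  have hs : s ∈ Icc 0 ε :=
    ⟨le_min (hu N le_rfl).1 (by positivity), (min_le_left _ _).trans (hu N le_rfl).2⟩
  have hsa : s ^ a ≤ l / (2 * c₂) := by
    refine (le_rpow_inv_iff_of_pos hs.1 (by positivity) (by linarith)).1 ?_
    rw [← one_div]
    exact min_le_right _ _
  have hfix : s ≤ l + ((1 - c₁ * l) * s - c₂ * s ^ a) := by
    have : c₂ * s ^ a ≤ l / 2 := by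
      calc c₂ * s ^ a ≤ c₂ * (l / (2 * c₂)) := mul_le_mul_of_nonneg_left hsa hc₂.le
        _ = l / 2 := by field_simp
    nlinarith [mul_le_mul_of_nonneg_left hs.2 hc₁]
  have hmono : MonotoneOn (fun x => l + ((1 - c₁ * l) * x - c₂ * x ^ a)) (Icc 0 ε) :=
    fun x hx y hy hxy =>
      (add_le_add_iff_left l).2
        (monotoneOn_mul_sub_mul_rpow (κ := 1 - c₁ * l) ha hc₂.le (by linarith) hx hy hxy)
  exact hmono.seq_le_seq_of_mem (x := fun _ => s) hNn (min_le_left _ _) (fun _ _ => hs)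
    (fun k hk => hu k hk.1) (fun _ _ => hfix)
    (fun k hk => by simpa [add_sub_assoc] using hstep k hk)

lemma mul_rpow_neg_le_of_step {a c₂ ε β : ℝ} {u : ℕ → ℝ} {N n : ℕ} (ha : 1 < a) (hc₂ : 0 ≤ c₂)
    (hε : a * c₂ * ε ^ (a - 1) ≤ 1) (hu : ∀ k, N ≤ k → u k ∈ Icc 0 ε) (hβ : 0 < β)
    (hβc : c₂ * β ^ (a - 1) ≤ 1 / (a - 1) * 2 ^ (-(1 / (a - 1)) - 1)) (hN : 1 ≤ N)
    (hβN : β ≤ u N) (hstep : ∀ k, N ≤ k → u k - c₂ * u k ^ a ≤ u (k + 1)) (hNn : N ≤ n) :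
    β * (n : ℝ) ^ (-(1 / (a - 1))) ≤ u n := by
  have hp : -(1 / (a - 1)) ≤ 0 := neg_nonpos.2 (one_div_nonneg.2 (by linarith))
  have hb : ∀ k : ℕ, N ≤ k → β * (k : ℝ) ^ (-(1 / (a - 1))) ∈ Icc 0 β := fun k hk =>
    ⟨by positivity, mul_le_of_le_one_right hβ.le
      (rpow_le_one_of_one_le_of_nonpos (by exact_mod_cast hN.trans hk) hp)⟩
  have hmono := monotoneOn_mul_sub_mul_rpow ha.le hc₂ hε
  refine hmono.seq_le_seq_of_mem (x := fun k => β * (k : ℝ) ^ (-(1 / (a - 1)))) hNn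
    ((hb N le_rfl).2.trans hβN)
    (fun k hk => ⟨(hb k hk.1).1, (hb k hk.1).2.trans (hβN.trans (hu N le_rfl).2)⟩)
    (fun k hk => hu k hk.1) (fun k hk => ?_) (fun k hk => by simpa using hstep k hk.1)
  simpa using mul_rpow_neg_add_one_le ha hβ hβc (by exact_mod_cast hN.trans hk.1 : (1 : ℝ) ≤ k)

section LowerRecursion

variable {a c₁ c₂ K ε β : ℝ} {u lam : ℕ → ℝ} {N : ℕ}

lemma mul_rpow_le_of_lower_recursion (ha : 1 ≤ a) (hK : 0 < K) (hc₁ : 0 ≤ c₁) (hc₂ : 0 < c₂)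
    (hε₁ : c₁ * ε ≤ 1 / 2) (hε₂ : a * c₂ * ε ^ (a - 1) ≤ 1 / 2) (hN : 1 ≤ N)
    (hu : ∀ k, N ≤ k → u k ∈ Icc 0 ε) (hKN : ∀ k : ℕ, N ≤ k → c₁ * K / k ≤ 1 / 2)
    (hβ : 0 ≤ β) (hβu : ∀ k ∈ Finset.Icc 1 N, β ≤ u k)
    (hlam : ∀ n, 1 ≤ n → 0 ≤ lam n ∧ lam n ≤ K / n)
    (hrec : ∀ n, 2 ≤ n → ∀ j, 1 ≤ j → j ≤ n - 1 →
      u (j + 1) ≥ lam n + (1 - c₁ * lam n) * u j - c₂ * u j ^ a)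
    {n : ℕ} (hn : 1 ≤ n) :
    min (β / K ^ (1 / a)) ((2 * c₂)⁻¹ ^ (1 / a)) * lam n ^ (1 / a) ≤ u n := by
  obtain ⟨hl, hlK⟩ := hlam n hn
  have hmin : min β ((lam n / (2 * c₂)) ^ (1 / a)) ≤ u n := by
    rcases lt_or_ge n N with hnN | hNn
    · exact (min_le_left _ _).trans (hβu n (Finset.mem_Icc.2 ⟨hn, hnN.le⟩))
    have hc₁l : c₁ * lam n ≤ 1 / 2 := by
      calc c₁ * lam n ≤ c₁ * K / n := by
            rw [mul_div_assoc]; exact mul_le_mul_of_nonneg_left hlK hc₁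
        _ ≤ 1 / 2 := hKN n hNn
    refine (min_le_min_right _ (hβu N (Finset.mem_Icc.2 ⟨hN, le_rfl⟩))).trans ?_
    exact min_rpow_le_of_step ha hc₁ hc₂ hε₁ hε₂ hl hc₁l hu
      (fun k ⟨hNk, hkn⟩ => hrec n (by omega) k (by omega) (by omega)) hNn
  rw [div_eq_inv_mul, mul_rpow (by positivity) hl] at hmin
  refine (min_div_mul_le_min hβ (by positivity) ?_ (by positivity)).trans hmin
  exact rpow_le_rpow hl (hlK.trans (div_le_self hK.le (by exact_mod_cast hn))) (by positivity)

lemma mul_rpow_neg_le_of_lower_recursion (ha : 1 < a) (hc₁ : 0 ≤ c₁) (hc₂ : 0 ≤ c₂)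
    (hε₁ : c₁ * ε ≤ 1) (hε₂ : a * c₂ * ε ^ (a - 1) ≤ 1) (hN : 1 ≤ N)
    (hu : ∀ k, N ≤ k → u k ∈ Icc 0 ε) (hβ : 0 < β)
    (hβc : c₂ * β ^ (a - 1) ≤ 1 / (a - 1) * 2 ^ (-(1 / (a - 1)) - 1))
    (hβu : ∀ k ∈ Finset.Icc 1 N, β ≤ u k) (hlam : ∀ n, 1 ≤ n → 0 ≤ lam n)
    (hrec : ∀ n, 2 ≤ n → ∀ j, 1 ≤ j → j ≤ n - 1 →
      u (j + 1) ≥ lam n + (1 - c₁ * lam n) * u j - c₂ * u j ^ a)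
    {n : ℕ} (hn : 1 ≤ n) :
    β * (n : ℝ) ^ (-(1 / (a - 1))) ≤ u n := by
  rcases lt_or_ge n N with hnN | hNn
  · refine (mul_le_of_le_one_right hβ.le (rpow_le_one_of_one_le_of_nonpos ?_ ?_)).trans
      (hβu n (Finset.mem_Icc.2 ⟨hn, hnN.le⟩))
    · exact_mod_cast hn
    · exact neg_nonpos.2 (one_div_nonneg.2 (by linarith))
  refine mul_rpow_neg_le_of_step ha hc₂ hε₂ hu hβ hβc hN
    (hβu N (Finset.mem_Icc.2 ⟨hN, le_rfl⟩)) (fun k hk => ?_) hNn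
  have hdrift : 0 ≤ lam (k + 1) * (1 - c₁ * u k) :=
    mul_nonneg (hlam (k + 1) (by omega)) (by nlinarith [mul_le_mul_of_nonneg_left (hu k hk).2 hc₁])
  nlinarith [hrec (k + 1) (by omega) k (by omega) (by omega)]

end LowerRecursion

theorem stmt9 (a K c₁ c₂ : ℝ) (ha : 1 < a) (hK : 0 < K) (hc₁ : 0 < c₁) (hc₂ : 0 < c₂)
    (u : ℕ → ℝ) (hu : ∀ j, 1 ≤ j → 0 < u j)
    (hu0 : Filter.Tendsto u Filter.atTop (nhds 0)) :
    ∃ c : ℝ, 0 < c ∧ ∀ lam : ℕ → ℝ,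
      (∀ n, 1 ≤ n → 0 ≤ lam n ∧ lam n ≤ K / n) →
      (∀ n, 2 ≤ n → ∀ j, 1 ≤ j → j ≤ n - 1 →
        u (j + 1) ≥ lam n + (1 - c₁ * lam n) * u j - c₂ * u j ^ a) →
      ∀ n, 1 ≤ n → u n ≥ c * (lam n ^ (1 / a) + (n : ℝ) ^ (-(1 / (a - 1)))) := by
  obtain ⟨ε, ⟨hε₁, hε₂⟩, hε⟩ := (((eventually_mul_rpow_le c₁ one_pos one_half_pos).and
    (eventually_mul_rpow_le (a * c₂) (sub_pos.2 ha) one_half_pos)).and self_mem_nhdsWithin).exists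
  rw [rpow_one] at hε₁
  obtain ⟨N, hN⟩ := eventually_atTop.1 ((hu0.eventually (eventually_le_nhds hε)).and
    (((tendsto_const_div_atTop_nhds_zero_nat (c₁ * K)).eventually
      (eventually_le_nhds one_half_pos)).and (eventually_ge_atTop 1)))
  have huε : ∀ k, N ≤ k → u k ∈ Icc 0 ε := fun k hk => ⟨(hu k (hN k hk).2.2).le, (hN k hk).1⟩
  have hN1 : 1 ≤ N := (hN N le_rfl).2.2
  have hbelow : ∀ᶠ x in 𝓝[>] 0, ∀ n ∈ Finset.Icc 1 N, x ≤ u n :=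
    (eventually_all_finset _).2 fun n hn =>
      nhdsWithin_le_nhds (eventually_le_nhds (hu n (Finset.mem_Icc.1 hn).1))
  obtain ⟨β, ⟨hβu, hβc⟩, hβ⟩ := ((hbelow.and (eventually_mul_rpow_le c₂ (sub_pos.2 ha)
    (mul_pos (one_div_pos.2 (sub_pos.2 ha)) (rpow_pos_of_pos two_pos (-(1 / (a - 1)) - 1))))).and
    self_mem_nhdsWithin).exists
  refine ⟨min (min (β / K ^ (1 / a)) ((2 * c₂)⁻¹ ^ (1 / a))) β / 2, by positivity,
    fun lam hlam hrec n hn =>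
      min_div_two_mul_add_le (rpow_nonneg (hlam n hn).1 _) (by positivity) ?_ ?_⟩
  · exact mul_rpow_le_of_lower_recursion ha.le hK hc₁.le hc₂ hε₁ hε₂ hN1 huε
      (fun k hk => (hN k hk).2.1) hβ.le hβu hlam hrec hn
  · exact mul_rpow_neg_le_of_lower_recursion ha hc₁.le hc₂.le (by linarith) (by linarith)
      hN1 huε hβ hβc hβu (fun n hn => (hlam n hn).1) hrec hn
end

section
/- Let ξ₁,…,ξ_k be independent real random variables with E[ξᵢ] = 0 and E[|ξᵢ|^a] < ∞ for some a ∈ [1,2]. Then E[|Σᵢ ξᵢ|^a] ≤ 2·Σᵢ E[|ξᵢ|^a]. -/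
/-!
For `1 ≤ p ≤ 2` write `φ t = |t| ^ (p - 2) * t`, the signed power `sign t * |t| ^ (p - 1)`
(at `t = 0` the junk value of `0 ^ (p - 2)` is multiplied by `0`); for `p > 1`, `p * φ` is the
derivative of `|t| ^ p`. Since `φ` is `(p - 1)`-Hölder with constant `2`, comparing derivatives
in `y` gives the pointwise bound `|x + y| ^ p ≤ |x| ^ p + p * φ x * y + 2 * |y| ^ p`
(for `p = 1` it is the triangle inequality). Taking `x` a partial sum and `y` an independent
centered summand, the middle term has zero expectation, and induction on the number of summands
finishes the proof.
-/

open MeasureTheory ProbabilityTheory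

namespace VonBahrEsseen

lemma abs_rpow_sub_two_mul_of_nonneg {p t : ℝ} (hp : 1 < p) (ht : 0 ≤ t) :
    |t| ^ (p - 2) * t = t ^ (p - 1) := by
  rcases ht.eq_or_lt with rfl | ht
  · simp [Real.zero_rpow (by linarith : p - 1 ≠ 0)]
  · rw [abs_of_pos ht, ← Real.rpow_add_one ht.ne']
    ring_nf

lemma abs_abs_rpow_sub_two_mul_le (p t : ℝ) : |(|t| ^ (p - 2) * t)| ≤ |t| ^ (p - 1) := by
  rcases eq_or_ne t 0 with rfl | ht
  · simp [Real.rpow_nonneg]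
  · rw [abs_mul, abs_of_nonneg (by positivity), ← Real.rpow_add_one (abs_ne_zero.2 ht),
      show p - 2 + 1 = p - 1 by ring]

lemma abs_rpow_sub_two_mul_add_sub_le {p x y : ℝ} (hp1 : 1 < p) (hp2 : p ≤ 2) (hy : 0 ≤ y) :
    |x + y| ^ (p - 2) * (x + y) - |x| ^ (p - 2) * x ≤ 2 * y ^ (p - 1) := by
  have hq : 0 ≤ p - 1 := by linarith
  have hy' : 0 ≤ y ^ (p - 1) := Real.rpow_nonneg hy _
  have of_nonneg : ∀ x, 0 ≤ x →
      |x + y| ^ (p - 2) * (x + y) - |x| ^ (p - 2) * x ≤ y ^ (p - 1) := by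
    intro x hx
    rw [abs_rpow_sub_two_mul_of_nonneg hp1 hx,
      abs_rpow_sub_two_mul_of_nonneg hp1 (add_nonneg hx hy)]
    linarith [Real.rpow_add_le_add_rpow hx hy hq (by linarith)]
  rcases le_total 0 x with hx | hx
  · linarith [of_nonneg x hx]
  rcases le_total (x + y) 0 with hxy | hxy
  · have := of_nonneg (-(x + y)) (by linarith)
    rw [show -(x + y) + y = -x by ring, abs_neg, abs_neg] at this
    linarith
  · have h1 : |x + y| ^ (p - 2) * (x + y) ≤ y ^ (p - 1) := by
      rw [abs_rpow_sub_two_mul_of_nonneg hp1 hxy]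
      exact Real.rpow_le_rpow hxy (by linarith) hq
    have h2 : -(|x| ^ (p - 2) * x) ≤ y ^ (p - 1) := by
      rw [← mul_neg, ← abs_neg x, abs_rpow_sub_two_mul_of_nonneg hp1 (by linarith)]
      exact Real.rpow_le_rpow (by linarith) (by linarith) hq
    linarith

lemma abs_add_rpow_le_of_nonneg {p : ℝ} (hp1 : 1 < p) (hp2 : p ≤ 2) (x : ℝ) {y : ℝ}
    (hy : 0 ≤ y) : |x + y| ^ p ≤ |x| ^ p + p * (|x| ^ (p - 2) * x) * y + 2 * |y| ^ p := by
  set F : ℝ → ℝ := fun y => |x| ^ p + p * (|x| ^ (p - 2) * x) * y + 2 * |y| ^ p - |x + y| ^ p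
  have hF : ∀ y, HasDerivAt F
      (p * (|x| ^ (p - 2) * x) + 2 * (p * |y| ^ (p - 2) * y) - p * |x + y| ^ (p - 2) * (x + y))
      y := fun y =>
    (((hasDerivAt_id y).const_mul _).const_add _ |>.add
      ((hasDerivAt_abs_rpow y hp1).const_mul 2)).sub
      ((hasDerivAt_abs_rpow (x + y) hp1).comp_const_add x y) |>.congr_deriv (by ring)
  have hmono : MonotoneOn F (Set.Ici 0) := by
    refine monotoneOn_of_hasDerivWithinAt_nonneg (convex_Ici 0)
      (fun y _ => (hF y).continuousAt.continuousWithinAt) (fun y _ => (hF y).hasDerivWithinAt) ?_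
    intro z hz
    rw [interior_Ici] at hz
    have hholder := mul_le_mul_of_nonneg_left
      (abs_rpow_sub_two_mul_add_sub_le (x := x) hp1 hp2 hz.le) (by linarith : (0 : ℝ) ≤ p)
    rw [mul_assoc p, abs_rpow_sub_two_mul_of_nonneg hp1 hz.le]
    linarith
  have hF0 : F 0 = 0 := by simp [F, Real.zero_rpow (by linarith : p ≠ 0)]
  have hFy : 0 ≤ F y := hF0 ▸ hmono Set.self_mem_Ici hy hy
  simp only [F] at hFy
  linarith

lemma abs_add_rpow_le {p : ℝ} (hp1 : 1 ≤ p) (hp2 : p ≤ 2) (x y : ℝ) :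
    |x + y| ^ p ≤ |x| ^ p + p * (|x| ^ (p - 2) * x) * y + 2 * |y| ^ p := by
  rcases hp1.eq_or_lt with rfl | hp1
  · have : -|y| ≤ |x| ^ ((1 : ℝ) - 2) * x * y := by
      refine neg_le_of_abs_le ((abs_mul _ y).trans_le ?_)
      exact mul_le_of_le_one_left (abs_nonneg y)
        ((abs_abs_rpow_sub_two_mul_le 1 x).trans (by norm_num))
    rw [Real.rpow_one, Real.rpow_one, Real.rpow_one, one_mul]
    linarith [abs_add_le x y]
  rcases le_total 0 y with hy | hy
  · exact abs_add_rpow_le_of_nonneg hp1 hp2 x hy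
  · simpa only [← neg_add, abs_neg, mul_neg, neg_mul, neg_neg] using
      abs_add_rpow_le_of_nonneg hp1 hp2 (-x) (neg_nonneg.2 hy)

lemma rpow_sub_one_le_one_add_rpow {p t : ℝ} (hp : 1 ≤ p) (ht : 0 ≤ t) :
    t ^ (p - 1) ≤ 1 + t ^ p := by
  rcases le_total t 1 with h | h
  · linarith [Real.rpow_le_one ht h (by linarith : 0 ≤ p - 1), Real.rpow_nonneg ht p]
  · linarith [Real.rpow_le_rpow_of_exponent_le h (by linarith : p - 1 ≤ p)]

variable {Ω : Type*} [MeasurableSpace Ω] {μ : Measure Ω}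

lemma memLp_ofReal_iff_integrable_abs_rpow {p : ℝ} (hp : 0 < p) {X : Ω → ℝ}
    (hX : AEStronglyMeasurable X μ) :
    MemLp X (ENNReal.ofReal p) μ ↔ Integrable (fun ω => |X ω| ^ p) μ := by
  rw [← integrable_norm_rpow_iff hX (by simpa using hp) ENNReal.ofReal_ne_top,
    ENNReal.toReal_ofReal hp.le]
  simp only [Real.norm_eq_abs]

lemma integral_abs_add_rpow_le [IsFiniteMeasure μ] {p : ℝ} (hp1 : 1 ≤ p) (hp2 : p ≤ 2)
    {X Y : Ω → ℝ} (hX : MemLp X (ENNReal.ofReal p) μ) (hY : MemLp Y (ENNReal.ofReal p) μ)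
    (hXY : IndepFun X Y μ) (hY0 : μ[Y] = 0) :
    ∫ ω, |X ω + Y ω| ^ p ∂μ ≤ ∫ ω, |X ω| ^ p ∂μ + 2 * ∫ ω, |Y ω| ^ p ∂μ := by
  have hp0 : 0 < p := by linarith
  set g : ℝ → ℝ := fun t => p * (|t| ^ (p - 2) * t)
  have hg : Measurable g := by fun_prop
  have hXp := (memLp_ofReal_iff_integrable_abs_rpow hp0 hX.1).1 hX
  have hYp := (memLp_ofReal_iff_integrable_abs_rpow hp0 hY.1).1 hY
  have hgX : Integrable (fun ω => g (X ω)) μ := by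
    refine Integrable.mono' (((integrable_const 1).add hXp).const_mul p)
      (hg.comp_aemeasurable hX.1.aemeasurable).aestronglyMeasurable (.of_forall fun ω => ?_)
    rw [Real.norm_eq_abs, abs_mul, abs_of_pos hp0]
    exact mul_le_mul_of_nonneg_left ((abs_abs_rpow_sub_two_mul_le p (X ω)).trans
      (rpow_sub_one_le_one_add_rpow hp1 (abs_nonneg _))) hp0.le
  have hgXY : IndepFun (fun ω => g (X ω)) Y μ := hXY.comp hg measurable_id
  have hcross : Integrable (fun ω => g (X ω) * Y ω) μ :=
    hgXY.integrable_mul hgX (hY.integrable (by simpa using hp1))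
  have hcross0 : ∫ ω, g (X ω) * Y ω ∂μ = 0 := by
    rw [hgXY.integral_fun_mul_eq_mul_integral hgX.1 hY.1, hY0, mul_zero]
  have hsum : Integrable (fun ω => |X ω + Y ω| ^ p) μ :=
    (memLp_ofReal_iff_integrable_abs_rpow hp0 (hX.1.add hY.1)).1 (hX.add hY)
  have hlin : Integrable (fun ω => |X ω| ^ p + g (X ω) * Y ω) μ := hXp.add hcross
  calc ∫ ω, |X ω + Y ω| ^ p ∂μ
      ≤ ∫ ω, (|X ω| ^ p + g (X ω) * Y ω + 2 * |Y ω| ^ p) ∂μ :=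
        integral_mono hsum (hlin.add (hYp.const_mul 2))
          fun ω => abs_add_rpow_le hp1 hp2 (X ω) (Y ω)
    _ = ∫ ω, |X ω| ^ p ∂μ + 2 * ∫ ω, |Y ω| ^ p ∂μ := by
        rw [integral_add hlin (hYp.const_mul 2), integral_add hXp hcross, hcross0,
          integral_const_mul, add_zero]

lemma integral_abs_sum_rpow_le [IsFiniteMeasure μ] {p : ℝ} (hp1 : 1 ≤ p) (hp2 : p ≤ 2)
    {ι : Type*} {ξ : ι → Ω → ℝ} (hξ : ∀ i, MemLp (ξ i) (ENNReal.ofReal p) μ)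
    (hind : iIndepFun ξ μ) (hcen : ∀ i, μ[ξ i] = 0) (s : Finset ι) :
    ∫ ω, |∑ i ∈ s, ξ i ω| ^ p ∂μ ≤ 2 * ∑ i ∈ s, ∫ ω, |ξ i ω| ^ p ∂μ := by
  classical
  induction s using Finset.induction_on with
  | empty => simp [Real.zero_rpow (by linarith : p ≠ 0)]
  | insert j s hjs ih =>
    have hstep := integral_abs_add_rpow_le hp1 hp2 (memLp_finsetSum' s fun i _ => hξ i) (hξ j)
      (hind.indepFun_finsetSum_of_notMem₀ (fun i => (hξ i).1.aemeasurable) hjs) (hcen j)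
    simp only [Finset.sum_apply] at hstep
    simp only [Finset.sum_insert hjs, add_comm (ξ j _)]
    linarith

end VonBahrEsseen

open VonBahrEsseen in
theorem stmt10_general {Ω : Type*} [MeasurableSpace Ω] (μ : Measure Ω) [IsProbabilityMeasure μ]
    (k : ℕ) (ξ : Fin k → Ω → ℝ)
    (hm : ∀ i, Measurable (ξ i))
    (a : ℝ) (ha1 : 1 ≤ a) (ha2 : a ≤ 2)
    (hi : ∀ i, Integrable (fun ω => |ξ i ω| ^ a) μ)
    (hcen : ∀ i, ∫ ω, ξ i ω ∂μ = 0)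
    (hind : iIndepFun ξ μ) :
    ∫ ω, |∑ i, ξ i ω| ^ a ∂μ ≤ 2 * ∑ i, ∫ ω, |ξ i ω| ^ a ∂μ :=
  integral_abs_sum_rpow_le ha1 ha2
    (fun i => (memLp_ofReal_iff_integrable_abs_rpow (by linarith) (hm i).aestronglyMeasurable).2
      (hi i)) hind hcen Finset.univ

theorem stmt10 {Ω : Type*} [MeasurableSpace Ω] (μ : Measure Ω) [IsProbabilityMeasure μ]
    (k : ℕ) (ξ : Fin k → Ω → ℝ)
    (hm : ∀ i, Measurable (ξ i))
    (a : ℝ) (ha1 : 1 ≤ a) (ha2 : a ≤ 2)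
    (hi : ∀ i, Integrable (fun ω => |ξ i ω| ^ a) μ)
    (hint : ∀ i, Integrable (ξ i) μ)
    (hcen : ∀ i, ∫ ω, ξ i ω ∂μ = 0)
    (hind : iIndepFun ξ μ) :
    ∫ ω, |∑ i, ξ i ω| ^ a ∂μ ≤ 2 * ∑ i, ∫ ω, |ξ i ω| ^ a ∂μ :=
  stmt10_general μ k ξ hm a ha1 ha2 hi hcen hind
end

section
/- Let A be a random variable with values in [ε₀, Θ] for some 0 < ε₀ ≤ Θ < ∞, let b ≥ 2, and let ϱ(r) := inf_{t≥0} r^{−t}·E[A^t]. Suppose p := inf_{t∈[0,1]} E[A^t] satisfies p < 1/b. Then q := sup_{r ∈ [r̲, r̄]} r·ϱ(r) < 1/b, where r̲ := exp(E[log A]) and r̄ := inf{r > 0 : ϱ(r) ≤ 1/b}. -/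
open MeasureTheory

theorem stmt12 {Ω : Type*} [MeasurableSpace Ω] (μ : Measure Ω) [IsProbabilityMeasure μ]
    (b : ℕ) (hb : 2 ≤ b) (ε₀ Θ : ℝ) (hε : 0 < ε₀) (hεΘ : ε₀ ≤ Θ)
    (A : Ω → ℝ) (hA : Measurable A) (hbd : ∀ ω, ε₀ ≤ A ω ∧ A ω ≤ Θ)
    (ϱ : ℝ → ℝ)
    (hϱ : ∀ r : ℝ, ϱ r = ⨅ t : {t : ℝ // 0 ≤ t}, r ^ (-(t : ℝ)) * ∫ ω, A ω ^ (t : ℝ) ∂μ)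
    (p : ℝ) (hp : p = ⨅ t : Set.Icc (0 : ℝ) 1, ∫ ω, A ω ^ (t : ℝ) ∂μ)
    (rlow : ℝ) (hrlow : rlow = Real.exp (∫ ω, Real.log (A ω) ∂μ))
    (rbar : ℝ) (hrbar : rbar = sInf {r : ℝ | 0 < r ∧ ϱ r ≤ 1 / b})
    (q : ℝ) (hq : q = sSup ((fun r => r * ϱ r) '' Set.Icc rlow rbar))
    (hplt : p < 1 / b) :
    q < 1 / b := by
  have hεp : ∀ ω, 0 < A ω := fun ω => lt_of_lt_of_le hε (hbd ω).1
  have hint_nonneg : ∀ t : ℝ, 0 ≤ ∫ ω, A ω ^ t ∂μ := fun t =>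
    integral_nonneg fun ω => Real.rpow_nonneg (hεp ω).le t
  have hbdd : ∀ r : ℝ, 0 < r → BddBelow (Set.range fun t : {t : ℝ // 0 ≤ t} =>
      r ^ (-(t : ℝ)) * ∫ ω, A ω ^ (t : ℝ) ∂μ) := by
    intro r hr
    refine ⟨0, ?_⟩
    rintro x ⟨t, rfl⟩
    exact mul_nonneg (Real.rpow_nonneg hr.le _) (hint_nonneg _)
  have hp0 : 0 ≤ p := by
    rw [hp]; exact le_ciInf fun t => hint_nonneg _
  have hϱ1 : ϱ 1 ≤ p := by
    rw [hp]
    refine le_ciInf fun t => ?_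
    have h := ciInf_le (hbdd 1 one_pos) ⟨(t : ℝ), t.2.1⟩
    rw [hϱ 1]
    simpa using h
  have hbb : BddBelow {r : ℝ | 0 < r ∧ ϱ r ≤ 1 / b} := ⟨0, fun x hx => hx.1.le⟩
  have hrbar1 : rbar ≤ 1 := by
    rw [hrbar]
    exact csInf_le hbb ⟨one_pos, hϱ1.trans hplt.le⟩
  have key : ∀ r ∈ Set.Icc rlow rbar, r * ϱ r ≤ p := by
    intro r hr
    have hr0 : 0 < r := lt_of_lt_of_le (hrlow ▸ Real.exp_pos _) hr.1
    have hr1 : r ≤ 1 := hr.2.trans hrbar1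
    rw [hp]
    refine le_ciInf fun t => ?_
    have h1 : ϱ r ≤ r ^ (-(t : ℝ)) * ∫ ω, A ω ^ (t : ℝ) ∂μ := by
      rw [hϱ r]
      exact ciInf_le (hbdd r hr0) ⟨(t : ℝ), t.2.1⟩
    calc r * ϱ r ≤ r * (r ^ (-(t : ℝ)) * ∫ ω, A ω ^ (t : ℝ) ∂μ) :=
          mul_le_mul_of_nonneg_left h1 hr0.le
      _ = r ^ (1 - (t : ℝ)) * ∫ ω, A ω ^ (t : ℝ) ∂μ := by
          rw [sub_eq_add_neg, Real.rpow_add hr0, Real.rpow_one, mul_assoc]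
      _ ≤ 1 * ∫ ω, A ω ^ (t : ℝ) ∂μ := by
          refine mul_le_mul_of_nonneg_right ?_ (hint_nonneg _)
          exact Real.rpow_le_one hr0.le hr1 (sub_nonneg.2 t.2.2)
      _ = _ := one_mul _
  have hqle : q ≤ p := by
    rw [hq]
    refine Real.sSup_le ?_ hp0
    rintro x ⟨r, hr, rfl⟩
    exact key r hr
  exact lt_of_le_of_lt hqle hplt
end

section
/- With notation as above (A bounded positive, b ≥ 2, ϱ the Chernoff rate function, p = inf_{t∈[0,1]} E[A^t], q = sup_{r∈[r̲,r̄]} r·ϱ(r)), if p ≥ 1/b then q ≥ p. In particular p > 1/b implies q > 1/b, and p = 1/b implies q = 1/b. -/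
/-!
Put `M t = 𝔼[A ^ t]`, the moment generating function of `log A`. Its logarithm is convex (a
cumulant generating function) and `M t ≥ r̲ ^ t` by Jensen. Since `log p` is the infimum of `log M`
on `[0, 1]`, some line through `(1, log p)` with slope `s ≤ 0` stays below `log M` on `[0, ∞)`;
at `r = exp s` this reads `ϱ r ≥ p / r`, with `p ≤ r ≤ 1`. Such an `r` lies in `[r̲, r̄]` as soon
as `r̲ < p`: otherwise `p ≤ r ϱ(r) ≤ r ϱ(r₀) ≤ 1/b ≤ p` for some `r₀ < r` with `ϱ r₀ ≤ 1/b`,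
so `r = 1` and `M ≥ p` on `[0, ∞)`, which makes `ϱ r₀ > p`. When `p ≤ r̲`, `r = r̲` works since
`ϱ r̲ = 1`. Conversely `r ϱ(r) ≤ p` for `r ≤ 1`, and `p = 1/b` forces `r̄ ≤ 1`.
-/

open MeasureTheory ProbabilityTheory Real Set Topology

noncomputable section

def chernoffRate (M : ℝ → ℝ) (r : ℝ) : ℝ := ⨅ t : {t : ℝ // 0 ≤ t}, r ^ (-(t : ℝ)) * M t

def chernoffThreshold (M : ℝ → ℝ) (c : ℝ) : ℝ := sInf {r : ℝ | 0 < r ∧ chernoffRate M r ≤ c}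

end

namespace ProbabilityTheory

variable {Ω : Type*} [MeasurableSpace Ω] {μ : Measure Ω} {X : Ω → ℝ}

lemma convexOn_cgf (h : ∀ t, Integrable (fun ω ↦ exp (t * X ω)) μ) :
    ConvexOn ℝ univ (cgf X μ) := by
  have hint : interior (integrableExpSet X μ) = univ := by
    rw [interior_eq_iff_isOpen.2] <;> simp [integrableExpSet, h]
  have hcgf : AnalyticOnNhd ℝ (cgf X μ) univ := hint ▸ analyticOnNhd_cgf
  refine convexOn_univ_of_deriv2_nonneg (fun t ↦ (hcgf t trivial).differentiableAt)
    (fun t ↦ (hcgf t trivial).deriv.differentiableAt) fun t ↦ ?_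
  rw [← iteratedDeriv_eq_iterate, iteratedDeriv_two_cgf_eq_integral (hint ▸ mem_univ t)]
  exact div_nonneg (integral_nonneg fun ω ↦ by positivity) mgf_nonneg

lemma exp_mul_integral_le_mgf [IsProbabilityMeasure μ] (hX : Integrable X μ)
    (h : Integrable (fun ω ↦ exp (t * X ω)) μ) :
    exp (t * μ[X]) ≤ mgf X μ t := by
  rw [← integral_const_mul]
  exact convexOn_exp.map_integral_le continuous_exp.continuousOn isClosed_univ
    (ae_of_all _ fun _ ↦ mem_univ _) (hX.const_mul t) h

lemma integral_rpow_eq_mgf_log {A : Ω → ℝ} (hA : ∀ ω, 0 < A ω) (t : ℝ) :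
    ∫ ω, A ω ^ t ∂μ = mgf (fun ω ↦ log (A ω)) μ t :=
  integral_congr_ae (ae_of_all _ fun ω ↦ by simp only [rpow_def_of_pos (hA ω), mul_comm])

end ProbabilityTheory

lemma ConvexOn.exists_le_add_mul_sub_one {ψ : ℝ → ℝ} {m : ℝ} (hψ : ConvexOn ℝ (Ici 0) ψ)
    (hm : ∀ u ∈ Icc (0 : ℝ) 1, m ≤ ψ u) : ∃ s ≤ 0, ∀ u, 0 ≤ u → m + s * (u - 1) ≤ ψ u := by
  have hslope : ∀ u ∈ Ico (0 : ℝ) 1, ∀ v, 1 < v → (m - ψ u) / (1 - u) ≤ (ψ v - m) / (v - 1) := by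
    intro u hu v hv
    have h1u : 0 < 1 - u := sub_pos.2 hu.2
    have hv1 : 0 < v - 1 := sub_pos.2 hv
    have hm1 := hm 1 ⟨zero_le_one, le_rfl⟩
    calc (m - ψ u) / (1 - u) ≤ (ψ 1 - ψ u) / (1 - u) := by gcongr
      _ ≤ (ψ v - ψ 1) / (v - 1) :=
        hψ.slope_mono_adjacent hu.1 (zero_le_one.trans hv.le) hu.2 hv
      _ ≤ (ψ v - m) / (v - 1) := by gcongr
  set L := (fun u ↦ (m - ψ u) / (1 - u)) '' Ico 0 1
  have hL : L.Nonempty := ⟨_, mem_image_of_mem _ (left_mem_Ico.2 zero_lt_one)⟩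
  have hLv : ∀ v, 1 < v → sSup L ≤ (ψ v - m) / (v - 1) := fun v hv ↦
    csSup_le hL (by rintro _ ⟨u, hu, rfl⟩; exact hslope u hu v hv)
  have hLbdd : BddAbove L := ⟨_, by rintro _ ⟨u, hu, rfl⟩; exact hslope u hu 2 one_lt_two⟩
  refine ⟨sSup L, csSup_le hL ?_, fun u hu ↦ ?_⟩
  · rintro _ ⟨u, hu, rfl⟩
    exact div_nonpos_of_nonpos_of_nonneg (sub_nonpos.2 (hm u (mem_Icc_of_Ico hu)))
      (sub_pos.2 hu.2).le
  rcases lt_trichotomy u 1 with hu1 | rfl | hu1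
  · have := le_csSup hLbdd (mem_image_of_mem _ ⟨hu, hu1⟩)
    rw [div_le_iff₀ (sub_pos.2 hu1)] at this
    linarith
  · simpa using hm 1 ⟨zero_le_one, le_rfl⟩
  · have := hLv u hu1
    rw [le_div_iff₀ (sub_pos.2 hu1)] at this
    linarith

section ChernoffRate

variable {M : ℝ → ℝ} {r r' t c p ρ : ℝ}

lemma chernoffRate_le (hM : ∀ t, 0 < M t) (hr : 0 ≤ r) (ht : 0 ≤ t) :
    chernoffRate M r ≤ r ^ (-t) * M t :=
  ciInf_le ⟨0, by rintro _ ⟨u, rfl⟩; exact mul_nonneg (rpow_nonneg hr _) (hM u).le⟩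
    (⟨t, ht⟩ : {t : ℝ // 0 ≤ t})

lemma le_chernoffRate (h : ∀ t, 0 ≤ t → c ≤ r ^ (-t) * M t) : c ≤ chernoffRate M r :=
  have : Nonempty {t : ℝ // 0 ≤ t} := ⟨⟨0, le_rfl⟩⟩
  le_ciInf fun t ↦ h t t.2

lemma chernoffRate_le_one (hM : ∀ t, 0 < M t) (hM0 : M 0 = 1) (hr : 0 ≤ r) :
    chernoffRate M r ≤ 1 := by
  simpa [hM0] using chernoffRate_le hM hr le_rfl

lemma chernoffRate_anti (hM : ∀ t, 0 < M t) (hr : 0 < r) (hrr' : r ≤ r') :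
    chernoffRate M r' ≤ chernoffRate M r :=
  le_chernoffRate fun t ht ↦ (chernoffRate_le hM (hr.le.trans hrr') ht).trans <|
    mul_le_mul_of_nonneg_right (rpow_le_rpow_of_nonpos hr hrr' (neg_nonpos.2 ht)) (hM t).le

lemma one_le_chernoffRate (hρM : ∀ t, 0 ≤ t → ρ ^ t ≤ M t) (hr : 0 < r) (hrρ : r ≤ ρ) :
    1 ≤ chernoffRate M r :=
  le_chernoffRate fun t ht ↦ calc
    1 = r ^ (-t) * r ^ t := by rw [← rpow_add hr]; simp
    _ ≤ r ^ (-t) * M t := by gcongr; exact (rpow_le_rpow hr.le hrρ ht).trans (hρM t ht)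

lemma mul_chernoffRate_le (hM : ∀ t, 0 < M t) (hp : IsGLB (M '' Icc 0 1) p) (hr : 0 < r)
    (hr1 : r ≤ 1) : r * chernoffRate M r ≤ p := by
  refine hp.2 ?_
  rintro _ ⟨t, ht, rfl⟩
  calc r * chernoffRate M r ≤ r * (r ^ (-t) * M t) := by
        gcongr; exact chernoffRate_le hM hr.le ht.1
    _ = r ^ (1 - t) * M t := by rw [rpow_sub hr, rpow_one, rpow_neg hr.le]; ring
    _ ≤ M t := mul_le_of_le_one_left (hM t).le (rpow_le_one hr.le hr1 (by linarith [ht.2]))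

lemma exists_le_mul_chernoffRate (hM : ∀ t, 0 < M t) (hM0 : M 0 = 1)
    (hconv : ConvexOn ℝ (Ici 0) fun t ↦ log (M t)) (hp : 0 < p)
    (hpM : ∀ t ∈ Icc (0 : ℝ) 1, p ≤ M t) : ∃ r, p ≤ r ∧ r ≤ 1 ∧ p ≤ r * chernoffRate M r := by
  obtain ⟨s, hs, hline⟩ :=
    hconv.exists_le_add_mul_sub_one fun u hu ↦ log_le_log hp (hpM u hu)
  have hps : log p ≤ s := by simpa [hM0] using hline 0 le_rfl
  refine ⟨exp s, by rwa [← exp_log hp, exp_le_exp], exp_le_one_iff.2 hs, ?_⟩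
  rw [← div_le_iff₀' (exp_pos s)]
  refine le_chernoffRate fun t ht ↦ ?_
  rw [← exp_mul, ← exp_log (hM t), ← exp_add, ← exp_log hp, ← exp_sub, exp_le_exp]
  linarith [hline t ht]

lemma lt_chernoffRate (hMp : ∀ t, 0 ≤ t → p ≤ M t) (hρM : ∀ t, 0 ≤ t → ρ ^ t ≤ M t)
    (hp : 0 < p) (hp1 : p < 1) (hρ : 0 < ρ) (hr : 0 < r) (hr1 : r < 1) :
    p < chernoffRate M r := by
  set κ := min (ρ / r) 1
  have hκ : 0 < κ := lt_min (div_pos hρ hr) one_pos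
  -- For `t ≤ T` the Jensen bound gives `r ^ (-t) * M t ≥ κ ^ T > p`; for `t ≥ T`, `M ≥ p` gives
  -- `r ^ (-t) * M t ≥ r ^ (-T) * p > p`.
  have hκT : ∀ᶠ T in 𝓝[>] (0 : ℝ), p < κ ^ T :=
    ((continuousAt_const_rpow hκ.ne').tendsto.eventually_const_lt (by rwa [rpow_zero])).filter_mono
      nhdsWithin_le_nhds
  obtain ⟨T, hpT, hT⟩ := (hκT.and self_mem_nhdsWithin).exists
  have hrT : p < r ^ (-T) * p :=
    lt_mul_of_one_lt_left hp (one_lt_rpow_of_pos_of_lt_one_of_neg hr hr1 (neg_neg_of_pos hT))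
  refine (lt_min hpT hrT).trans_le (le_chernoffRate fun t ht ↦ ?_)
  rcases le_total t T with htT | hTt
  · refine (min_le_left _ _).trans ?_
    calc κ ^ T ≤ κ ^ t := rpow_le_rpow_of_exponent_ge hκ (min_le_right _ _) htT
      _ ≤ (ρ / r) ^ t := rpow_le_rpow hκ.le (min_le_left _ _) ht
      _ = r ^ (-t) * ρ ^ t := by rw [div_rpow hρ.le hr.le, rpow_neg hr.le]; ring
      _ ≤ r ^ (-t) * M t := by gcongr; exact hρM t ht
  · refine (min_le_right _ _).trans ?_
    exact mul_le_mul (rpow_le_rpow_of_exponent_ge hr hr1.le (neg_le_neg hTt)) (hMp t ht) hp.le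
      (rpow_nonneg hr.le _)

end ChernoffRate

section ChernoffThreshold

variable {M : ℝ → ℝ} {r c p ρ : ℝ}

lemma chernoffThreshold_le (hr : 0 < r) (hrc : chernoffRate M r ≤ c) :
    chernoffThreshold M c ≤ r :=
  csInf_le ⟨0, fun _ h ↦ h.1.le⟩ ⟨hr, hrc⟩

lemma nonempty_chernoffRate_le (hM : ∀ t, 0 < M t) (hc : 0 < c) :
    {r : ℝ | 0 < r ∧ chernoffRate M r ≤ c}.Nonempty := by
  have hr : 0 < M 1 / c := div_pos (hM 1) hc
  refine ⟨M 1 / c, hr, (chernoffRate_le hM hr.le zero_le_one).trans_eq ?_⟩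
  rw [rpow_neg_one, inv_div, div_mul_cancel₀ _ (hM 1).ne']

lemma le_chernoffThreshold (hM : ∀ t, 0 < M t) (hρM : ∀ t, 0 ≤ t → ρ ^ t ≤ M t) (hc : 0 < c)
    (hc1 : c < 1) : ρ ≤ chernoffThreshold M c :=
  le_csInf (nonempty_chernoffRate_le hM hc) fun _ ⟨hr, hrc⟩ ↦
    le_of_not_gt fun hrρ ↦ (one_le_chernoffRate hρM hr hrρ.le).not_gt (hrc.trans_lt hc1)

lemma le_sSup_mul_chernoffRate (hM : ∀ t, 0 < M t) (hM0 : M 0 = 1)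
    (hconv : ConvexOn ℝ (Ici 0) fun t ↦ log (M t)) (hρ : 0 < ρ)
    (hρM : ∀ t, 0 ≤ t → ρ ^ t ≤ M t) (hc : 0 < c) (hc1 : c < 1) (hp : IsGLB (M '' Icc 0 1) p)
    (hcp : c ≤ p) :
    p ≤ sSup ((fun r ↦ r * chernoffRate M r) '' Icc ρ (chernoffThreshold M c)) := by
  have hbdd : BddAbove ((fun r ↦ r * chernoffRate M r) '' Icc ρ (chernoffThreshold M c)) := by
    refine ⟨chernoffThreshold M c, ?_⟩
    rintro _ ⟨r, hr, rfl⟩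
    have hr0 : 0 < r := hρ.trans_le hr.1
    exact (mul_le_of_le_one_right hr0.le (chernoffRate_le_one hM hM0 hr0.le)).trans hr.2
  suffices ∃ r ∈ Icc ρ (chernoffThreshold M c), p ≤ r * chernoffRate M r by
    obtain ⟨r, hr, hpr⟩ := this
    exact hpr.trans (le_csSup hbdd (mem_image_of_mem _ hr))
  have hρθ := le_chernoffThreshold hM hρM hc hc1
  rcases le_or_gt p ρ with hpρ | hρp
  · exact ⟨ρ, ⟨le_rfl, hρθ⟩,
      hpρ.trans (le_mul_of_one_le_right hρ.le (one_le_chernoffRate hρM hρ le_rfl))⟩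
  have hp0 : 0 < p := hρ.trans hρp
  obtain ⟨r, hpr, hr1, hprr⟩ :=
    exists_le_mul_chernoffRate hM hM0 hconv hp0 fun t ht ↦ hp.1 (mem_image_of_mem M ht)
  refine ⟨r, ⟨hρp.le.trans hpr, ?_⟩, hprr⟩
  by_contra! hθr
  obtain ⟨r₀, ⟨hr₀, hr₀c⟩, hr₀r⟩ := exists_lt_of_csInf_lt (nonempty_chernoffRate_le hM hc) hθr
  have hanti := chernoffRate_anti hM hr₀ hr₀r.le
  -- `p ≤ r ϱ(r) ≤ r ϱ(r₀) ≤ r c ≤ r p` forces `r = 1`, i.e. `M ≥ p` on all of `[0, ∞)`.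
  obtain rfl : r = 1 := le_antisymm hr1 <| le_of_mul_le_mul_right (a := p) (by
    calc 1 * p ≤ r * chernoffRate M r := by rwa [one_mul]
      _ ≤ r * p := mul_le_mul_of_nonneg_left (hanti.trans (hr₀c.trans hcp)) (hp0.le.trans hpr))
    hp0
  rw [one_mul] at hprr
  have hMp : ∀ t, 0 ≤ t → p ≤ M t := fun t ht ↦ by
    simpa using hprr.trans (chernoffRate_le hM zero_le_one ht)
  have hp1 : p < 1 := (hprr.trans (hanti.trans hr₀c)).trans_lt hc1
  exact (lt_chernoffRate hMp hρM hp0 hp1 hρ hr₀ hr₀r).not_ge (hr₀c.trans hcp)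

lemma sSup_mul_chernoffRate_le (hM : ∀ t, 0 < M t) (hρ : 0 < ρ) (hp : IsGLB (M '' Icc 0 1) p)
    (hp0 : 0 ≤ p) :
    sSup ((fun r ↦ r * chernoffRate M r) '' Icc ρ (chernoffThreshold M p)) ≤ p := by
  have hθ : chernoffThreshold M p ≤ 1 :=
    chernoffThreshold_le one_pos (by simpa using mul_chernoffRate_le hM hp one_pos le_rfl)
  refine Real.sSup_le ?_ hp0
  rintro _ ⟨r, hr, rfl⟩
  exact mul_chernoffRate_le hM hp (hρ.trans_le hr.1) (hr.2.trans hθ)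

end ChernoffThreshold

theorem stmt13_general {Ω : Type*} [MeasurableSpace Ω] (μ : Measure Ω) [IsProbabilityMeasure μ]
    (b : ℕ) (hb : 2 ≤ b) (ε₀ Θ : ℝ) (hε : 0 < ε₀)
    (A : Ω → ℝ) (hA : Measurable A) (hbd : ∀ ω, ε₀ ≤ A ω ∧ A ω ≤ Θ)
    (ϱ : ℝ → ℝ)
    (hϱ : ∀ r : ℝ, ϱ r = ⨅ t : {t : ℝ // 0 ≤ t}, r ^ (-(t : ℝ)) * ∫ ω, A ω ^ (t : ℝ) ∂μ)
    (p : ℝ) (hp : p = ⨅ t : Set.Icc (0 : ℝ) 1, ∫ ω, A ω ^ (t : ℝ) ∂μ)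
    (rlow : ℝ) (hrlow : rlow = Real.exp (∫ ω, Real.log (A ω) ∂μ))
    (rbar : ℝ) (hrbar : rbar = sInf {r : ℝ | 0 < r ∧ ϱ r ≤ 1 / b})
    (q : ℝ) (hq : q = sSup ((fun r => r * ϱ r) '' Set.Icc rlow rbar)) :
    (1 / b ≤ p → p ≤ q) ∧ (1 / b < p → 1 / b < q) ∧ (p = 1 / b → q = 1 / b) := by
  have hApos : ∀ ω, 0 < A ω := fun ω ↦ hε.trans_le (hbd ω).1
  set X : Ω → ℝ := fun ω ↦ log (A ω)
  have hX : ∀ᵐ ω ∂μ, X ω ∈ Icc (log ε₀) (log Θ) :=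
    ae_of_all _ fun ω ↦ ⟨log_le_log hε (hbd ω).1, log_le_log (hApos ω) (hbd ω).2⟩
  have hint (t : ℝ) : Integrable (fun ω ↦ exp (t * X ω)) μ :=
    integrable_exp_mul_of_mem_Icc hA.log.aemeasurable hX
  have hM : (fun t : ℝ ↦ ∫ ω, A ω ^ t ∂μ) = mgf X μ := funext (integral_rpow_eq_mgf_log hApos)
  obtain rfl : ϱ = chernoffRate (mgf X μ) := hM ▸ funext hϱ
  have hpM : IsGLB (mgf X μ '' Icc 0 1) p := by
    rw [hp, ← hM, image_eq_range]
    exact isGLB_ciInf ⟨0, by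
      rintro _ ⟨t, rfl⟩; exact integral_nonneg fun ω ↦ rpow_nonneg (hApos ω).le _⟩
  have hρM (t : ℝ) (_ : 0 ≤ t) : rlow ^ t ≤ mgf X μ t := by
    rw [hrlow, ← exp_mul, mul_comm]
    exact exp_mul_integral_le_mgf (Integrable.of_mem_Icc _ _ hA.log.aemeasurable hX) (hint t)
  have hρ : 0 < rlow := hrlow ▸ exp_pos _
  have hb1 : (1 : ℝ) < b := by exact_mod_cast one_lt_two.trans_le hb
  have hc : (0 : ℝ) < 1 / b := by positivity
  have hc1 : 1 / (b : ℝ) < 1 := (div_lt_one (by positivity)).2 hb1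
  have hle (hcp : 1 / b ≤ p) : p ≤ q := by
    rw [hq, hrbar]
    exact le_sSup_mul_chernoffRate (fun t ↦ mgf_pos (hint t)) mgf_zero
      ((convexOn_cgf hint).subset (subset_univ _) (convex_Ici 0)) hρ hρM hc hc1 hpM hcp
  refine ⟨hle, fun h ↦ h.trans_le (hle h.le), fun h ↦ le_antisymm ?_ (h ▸ hle h.ge)⟩
  subst h
  rw [hq, hrbar]
  exact sSup_mul_chernoffRate_le (fun t ↦ mgf_pos (hint t)) hρ hpM hc.le

theorem stmt13 {Ω : Type*} [MeasurableSpace Ω] (μ : Measure Ω) [IsProbabilityMeasure μ]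
    (b : ℕ) (hb : 2 ≤ b) (ε₀ Θ : ℝ) (hε : 0 < ε₀) (hεΘ : ε₀ ≤ Θ)
    (A : Ω → ℝ) (hA : Measurable A) (hbd : ∀ ω, ε₀ ≤ A ω ∧ A ω ≤ Θ)
    (ϱ : ℝ → ℝ)
    (hϱ : ∀ r : ℝ, ϱ r = ⨅ t : {t : ℝ // 0 ≤ t}, r ^ (-(t : ℝ)) * ∫ ω, A ω ^ (t : ℝ) ∂μ)
    (p : ℝ) (hp : p = ⨅ t : Set.Icc (0 : ℝ) 1, ∫ ω, A ω ^ (t : ℝ) ∂μ)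
    (rlow : ℝ) (hrlow : rlow = Real.exp (∫ ω, Real.log (A ω) ∂μ))
    (rbar : ℝ) (hrbar : rbar = sInf {r : ℝ | 0 < r ∧ ϱ r ≤ 1 / b})
    (q : ℝ) (hq : q = sSup ((fun r => r * ϱ r) '' Set.Icc rlow rbar)) :
    (1 / b ≤ p → p ≤ q) ∧ (1 / b < p → 1 / b < q) ∧ (p = 1 / b → q = 1 / b) :=
  stmt13_general μ b hb ε₀ Θ hε A hA hbd ϱ hϱ p hp rlow hrlow rbar hrbar q hq
end
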